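/- arXiv:2308.08254 — 8 statements merged into one kernel-verified Lean document; each statement's English description precedes it below -/
import Mathlib

section
/- Let G be a finite group acting transitively on a finite set Ω, and suppose the derangement graph Γ(G,Ω) contains a clique of size |Ω|. Then for every (G,Ω)-Cameron–Liebler set L and every clique C of Γ(G,Ω) with |C| = |Ω|, one has |L ∩ C| = |Ω|·|L| / |G|; in particular |L ∩ C| is the same for all cliques of size |Ω|. -/
/-- The indicator vector (in `ℂ^G`) of a subset of `G`. -/
noncomputable def indicatorVec {G : Type*} (S : Set G) : G → ℂ :=
  Set.indicator S fun _ => (1 : ℂ)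

/-- A subset `L ⊆ G` is a `(G,Ω)`-Cameron–Liebler set if its indicator vector lies in the
`ℂ`-linear span of the indicator vectors of the stars `G_{a→b} = {g : G | g • a = b}`. -/
def IsCLSet (G : Type*) [Group G] (Ω : Type*) [MulAction G Ω] (L : Set G) : Prop :=
  indicatorVec L ∈
    Submodule.span ℂ {f : G → ℂ | ∃ a b : Ω, f = indicatorVec {g : G | g • a = b}}

/-- `g` is a derangement for the action of `G` on `Ω` if it fixes no point of `Ω`. -/
def IsDerangement (G : Type*) [Group G] (Ω : Type*) [MulAction G Ω] (g : G) : Prop :=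
  ∀ α : Ω, g • α ≠ α

/-- A clique in the derangement graph `Γ(G,Ω)`: a set of group elements any two distinct ones
of which differ by a derangement. -/
def IsDerangementClique (G : Type*) [Group G] (Ω : Type*) [MulAction G Ω] (C : Set G) : Prop :=
  ∀ g ∈ C, ∀ h ∈ C, g ≠ h → IsDerangement G Ω (g * h⁻¹)

open Pointwise

-- star cardinality
lemma star_card {G : Type*} [Group G] [Fintype G] {Ω : Type*} [Fintype Ω]
    [MulAction G Ω] [MulAction.IsPretransitive G Ω] (a b : Ω) :
    Nat.card {g : G | g • a = b} * Fintype.card Ω = Fintype.card G := by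
  obtain ⟨g₀, hg₀⟩ := MulAction.exists_smul_eq G a b
  have hset : {g : G | g • a = b} = g₀ • (MulAction.stabilizer G a : Set G) := by
    ext g
    simp only [Set.mem_setOf_eq, Set.mem_smul_set_iff_inv_smul_mem, SetLike.mem_coe,
      MulAction.mem_stabilizer_iff]
    constructor
    · intro h; rw [smul_eq_mul, mul_smul, h, ← hg₀, inv_smul_smul]
    · intro h; rw [← hg₀]
      have := congrArg (g₀ • ·) h
      simpa [smul_smul] using this
  have h1 : Nat.card {g : G | g • a = b} = Nat.card (MulAction.stabilizer G a) := by
    rw [hset, Nat.card_coe_set_eq, Set.ncard_smul_set, ← Nat.card_coe_set_eq]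
    rfl
  have h2 := Subgroup.card_mul_index (MulAction.stabilizer G a)
  rw [MulAction.index_stabilizer_of_transitive] at h2
  rw [h1, ← Nat.card_eq_fintype_card, ← Nat.card_eq_fintype_card]
  exact h2


/-- Let `G` act transitively on a finite set `Ω` such that the derangement graph `Γ(G,Ω)` has a
clique of size `|Ω|`.  Then every `(G,Ω)`-Cameron–Liebler set `L` meets every clique `C` of size
`|Ω|` in exactly `|Ω|·|L|/|G|` elements; in particular `|L ∩ C|` does not depend on `C`. -/
theorem cl_meets_clique {G : Type*} [Group G] [Fintype G] {Ω : Type*} [Fintype Ω]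
    [MulAction G Ω] [MulAction.IsPretransitive G Ω]
    (hclique : ∃ C : Set G, IsDerangementClique G Ω C ∧ Nat.card C = Fintype.card Ω)
    (L : Set G) (hL : IsCLSet G Ω L) :
    ∀ C : Set G, IsDerangementClique G Ω C → Nat.card C = Fintype.card Ω →
      Nat.card (L ∩ C : Set G) * Fintype.card G = Fintype.card Ω * Nat.card L := by
  classical
  intro C hC hCcard
  set T : Finset G := C.toFinset with hT
  have hTcard : T.card = Fintype.card Ω := by
    rw [hT, Set.toFinset_card, ← Nat.card_eq_fintype_card, hCcard]
  -- for each a b, exactly one element of T maps a to b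
  have key : ∀ a b : Ω, (T.filter (fun g => g • a = b)).card = 1 := by
    intro a b
    have hinj : Set.InjOn (fun g : G => g • a) C := by
      intro g hg h hh hgh
      by_contra hne
      apply hC g hg h hh hne (h • a)
      rw [smul_smul, mul_assoc, inv_mul_cancel, mul_one]
      exact hgh
    have himage : T.image (fun g : G => g • a) = Finset.univ := by
      apply Finset.eq_univ_of_card
      rw [Finset.card_image_of_injOn (fun g hg h hh => hinj (by simpa [hT] using hg)
        (by simpa [hT] using hh)), hTcard]
    have hb : b ∈ T.image (fun g : G => g • a) := himage ▸ Finset.mem_univ b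
    obtain ⟨g₀, hg₀T, hg₀⟩ := Finset.mem_image.mp hb
    rw [Finset.card_eq_one]
    refine ⟨g₀, ?_⟩
    ext g
    simp only [Finset.mem_filter, Finset.mem_singleton]
    constructor
    · rintro ⟨hgT, hg⟩
      exact hinj (by simpa [hT] using hgT) (by simpa [hT] using hg₀T)
        (by show g • a = g₀ • a; rw [hg, hg₀])
    · rintro rfl; exact ⟨hg₀T, hg₀⟩
  -- the linear functional
  let φ : (G → ℂ) →ₗ[ℂ] ℂ :=
    (Fintype.card G : ℂ) • (∑ g ∈ T, LinearMap.proj g) -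
      (Fintype.card Ω : ℂ) • (∑ g : G, LinearMap.proj (R := ℂ) (φ := fun _ : G => ℂ) g)
  have hφdef : ∀ f : G → ℂ, φ f = (Fintype.card G : ℂ) * ∑ g ∈ T, f g -
      (Fintype.card Ω : ℂ) * ∑ g : G, f g := by
    intro f
    simp [φ, LinearMap.sum_apply, Finset.mul_sum]
  have hker : indicatorVec L ∈ LinearMap.ker φ := by
    have hle : Submodule.span ℂ {f : G → ℂ | ∃ a b : Ω, f = indicatorVec {g : G | g • a = b}}
        ≤ LinearMap.ker φ := by
      rw [Submodule.span_le]
      rintro f ⟨a, b, rfl⟩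
      simp only [SetLike.mem_coe, LinearMap.mem_ker]
      have hsum1 : ∑ g ∈ T, indicatorVec {g : G | g • a = b} g
          = ((T.filter (fun g => g • a = b)).card : ℂ) := by
        simp [indicatorVec, Set.indicator_apply, Finset.sum_boole]
      have hsum2 : ∑ g : G, indicatorVec {g : G | g • a = b} g
          = (Nat.card {g : G | g • a = b} : ℂ) := by
        simp [indicatorVec, Set.indicator_apply, Finset.sum_boole, Nat.card_eq_fintype_card,
          Fintype.card_subtype]
      rw [hφdef, hsum1, hsum2, key a b]
      push_cast
      rw [← star_card (G := G) a b]
      push_cast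
      ring
    exact hle hL
  have hφ : φ (indicatorVec L) = 0 := hker
  have hsumT : ∑ g ∈ T, indicatorVec L g = (Nat.card (L ∩ C : Set G) : ℂ) := by
    have : (L ∩ C).toFinset = T.filter (fun g => g ∈ L) := by
      ext g; simp [hT, and_comm]
    rw [Nat.card_coe_set_eq, Set.ncard_eq_toFinset_card', this]
    simp [indicatorVec, Set.indicator_apply, Finset.sum_boole]
  have hsumU : ∑ g : G, indicatorVec L g = (Nat.card L : ℂ) := by
    rw [Nat.card_coe_set_eq, Set.ncard_eq_toFinset_card']
    simp [indicatorVec, Set.indicator_apply, Finset.sum_boole, Finset.filter_mem_eq_inter]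
  have : (Fintype.card G : ℂ) * (Nat.card (L ∩ C : Set G) : ℂ)
      = (Fintype.card Ω : ℂ) * (Nat.card L : ℂ) := by
    have h := hφ
    rw [hφdef, hsumT, hsumU] at h
    exact sub_eq_zero.mp h
  have hnat : Fintype.card G * Nat.card (L ∩ C : Set G) = Fintype.card Ω * Nat.card L := by
    exact_mod_cast this
  rw [mul_comm]
  exact hnat
end

section
/- Let G be a finite group acting faithfully and transitively on a finite set Ω such that no non-identity element of G fixes more than one point of Ω (i.e., G is a Frobenius permutation group). Let H = G_ω be the stabilizer of a point ω ∈ Ω (the Frobenius complement), and suppose K, the set consisting of the identity together with all derangements of G, is a (normal) subgroup of G (the Frobenius kernel). Then for every function f : H → K, the set S_f := { f(h)·h : h ∈ H } is a (G,Ω)-Cameron–Liebler set. -/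
open scoped Classical in
open Finset in
/-- Fixed point count in a Frobenius permutation group. -/
lemma frob_fixcount {G : Type*} [Group G] {Ω : Type*} [Fintype Ω] [MulAction G Ω]
    (hfrob : ∀ g : G, g ≠ 1 → ∀ α β : Ω, g • α = α → g • β = β → α = β)
    (K : Subgroup G)
    (hK : (K : Set G) = {1} ∪ {g : G | ∀ α : Ω, g • α ≠ α}) (y : G) :
    (∑ a : Ω, if y • a = a then (1 : ℂ) else 0) =
      if y = 1 then (Fintype.card Ω : ℂ) else if y ∈ K then 0 else 1 := by
  classical
  by_cases hy1 : y = 1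
  · subst hy1
    simp [Finset.card_univ]
  · rw [if_neg hy1]
    by_cases hyK : y ∈ K
    · rw [if_pos hyK]
      have hder : ∀ α : Ω, y • α ≠ α := by
        have hmem : y ∈ ({1} ∪ {g : G | ∀ α : Ω, g • α ≠ α} : Set G) := by
          rw [← hK]; exact hyK
        rcases hmem with h | h
        · exact absurd h hy1
        · exact h
      apply Finset.sum_eq_zero
      intro a _
      rw [if_neg (hder a)]
    · rw [if_neg hyK]
      have hex : ∃ α : Ω, y • α = α := by
        have : y ∉ ({1} ∪ {g : G | ∀ α : Ω, g • α ≠ α} : Set G) := hK ▸ hyK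
        rw [Set.mem_union] at this
        push_neg at this
        obtain ⟨-, h2⟩ := this
        simpa [Set.mem_setOf_eq, not_forall, not_not] using h2
      obtain ⟨α, hα⟩ := hex
      rw [Finset.sum_eq_single α]
      · rw [if_pos hα]
      · intro b _ hb
        rw [if_neg]
        intro hfix
        exact hb (hfrob y hy1 b α hfix hα)
      · intro h
        exact absurd (Finset.mem_univ α) h

open scoped Classical in
open Finset in
/-- Star difference identity for elements in the same coset of the Frobenius kernel. -/
lemma frob_stardiff {G : Type*} [Group G] {Ω : Type*} [Fintype Ω] [MulAction G Ω]
    (hfrob : ∀ g : G, g ≠ 1 → ∀ α β : Ω, g • α = α → g • β = β → α = β)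
    (K : Subgroup G)
    (hK : (K : Set G) = {1} ∪ {g : G | ∀ α : Ω, g • α ≠ α}) (hKnormal : K.Normal)
    (x g k : G) (hk : k ∈ K) :
    (∑ a : Ω, ((if x • a = (k * g) • a then (1 : ℂ) else 0)
        - (if x • a = g • a then 1 else 0))) =
      (Fintype.card Ω : ℂ) *
        ((if x = k * g then 1 else 0) - (if x = g then 1 else 0)) := by
  classical
  have hrw : ∀ (z : G) (a : Ω), (x • a = z • a) ↔ ((z⁻¹ * x) • a = a) := by
    intro z a
    rw [mul_smul, inv_smul_eq_iff]
  have hsum : ∀ z : G, (∑ a : Ω, if x • a = z • a then (1 : ℂ) else 0) =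
      if z⁻¹ * x = 1 then (Fintype.card Ω : ℂ) else if z⁻¹ * x ∈ K then 0 else 1 := by
    intro z
    rw [← frob_fixcount hfrob K hK (z⁻¹ * x)]
    apply Finset.sum_congr rfl
    intro a _
    rw [hrw z a]
  rw [Finset.sum_sub_distrib, hsum (k * g), hsum g]
  set y1 := (k * g)⁻¹ * x with hy1def
  set y2 := g⁻¹ * x with hy2def
  have hy1one : y1 = 1 ↔ x = k * g := by
    constructor
    · intro h; rw [hy1def, inv_mul_eq_one] at h; exact h.symm
    · intro h; rw [hy1def, h]; group
  have hy2one : y2 = 1 ↔ x = g := by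
    constructor
    · intro h; rw [hy2def, inv_mul_eq_one] at h; exact h.symm
    · intro h; rw [hy2def, h]; group
  have hrel : y2 = (g⁻¹ * k * g) * y1 := by
    simp [hy1def, hy2def, mul_assoc]
  have hconj : g⁻¹ * k * g ∈ K := by
    have := hKnormal.conj_mem k hk g⁻¹
    simpa [mul_assoc] using this
  have hKiff : y1 ∈ K ↔ y2 ∈ K := by
    constructor
    · intro h; rw [hrel]; exact mul_mem hconj h
    · intro h
      have : (g⁻¹ * k * g)⁻¹ * y2 = y1 := by rw [hrel, ← mul_assoc, inv_mul_cancel, one_mul]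
      rw [← this]; exact mul_mem (inv_mem hconj) h
  by_cases hxkg : x = k * g
  · by_cases hxg : x = g
    · -- then k = 1 and y1 = y2
      have hkg : k * g = g := by rw [← hxkg, hxg]
      have : y1 = y2 := by rw [hy1def, hy2def, hkg]
      rw [this, if_pos hxkg, if_pos hxg]
      ring
    · rw [if_pos (hy1one.mpr hxkg), if_neg (fun h => hxg (hy2one.mp h)), if_pos hxkg,
        if_neg hxg]
      have hy2K : y2 ∈ K := by
        rw [hrel, hy1one.mpr hxkg, mul_one]; exact hconj
      rw [if_pos hy2K]
      ring
  · by_cases hxg : x = g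
    · rw [if_neg (fun h => hxkg (hy1one.mp h)), if_pos (hy2one.mpr hxg), if_neg hxkg,
        if_pos hxg]
      have hy1K : y1 ∈ K := by
        have : y1 = (g⁻¹ * k * g)⁻¹ * y2 := by
          rw [hrel, ← mul_assoc, inv_mul_cancel, one_mul]
        rw [this, hy2one.mpr hxg, mul_one]
        exact inv_mem hconj
      rw [if_pos hy1K]
      ring
    · rw [if_neg (fun h => hxkg (hy1one.mp h)), if_neg (fun h => hxg (hy2one.mp h)),
        if_neg hxkg, if_neg hxg]
      by_cases hy1K : y1 ∈ K
      · rw [if_pos hy1K, if_pos (hKiff.mp hy1K)]; ring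
      · rw [if_neg hy1K, if_neg (fun h => hy1K (hKiff.mpr h))]; ring

open Finset in
lemma sum_ite_eq_exists {H G : Type*} [Fintype H] (φ : H → G)
    (hφ : Function.Injective φ) (x : G) [DecidableEq G] [DecidablePred fun h : H => x = φ h]
    [Decidable (∃ h, x = φ h)] :
    (∑ h : H, if x = φ h then (1 : ℂ) else 0) = if ∃ h, x = φ h then 1 else 0 := by
  by_cases hex : ∃ h, x = φ h
  · obtain ⟨h0, rfl⟩ := hex
    rw [if_pos ⟨h0, rfl⟩, Finset.sum_eq_single h0]
    · rw [if_pos rfl]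
    · intro b _ hb
      rw [if_neg (fun h => hb (hφ h.symm))]
    · intro h; exact absurd (Finset.mem_univ h0) h
  · rw [if_neg hex]
    apply Finset.sum_eq_zero
    intro h _
    rw [if_neg (fun he => hex ⟨h, he⟩)]

/-- Let `G` be a finite Frobenius permutation group on `Ω` (faithful, transitive, and no
non-identity element fixes more than one point), let `H = G_ω` be a point stabilizer (the
Frobenius complement) and let `K`, the identity together with all derangements, be a (normal)
subgroup of `G` (the Frobenius kernel).  Then for any function `f : H → K`, the set
`S_f = {f(h)·h : h ∈ H}` is a `(G,Ω)`-Cameron–Liebler set. -/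
theorem frobenius_transversal_isCLSet {G : Type*} [Group G] [Fintype G] {Ω : Type*} [Fintype Ω]
    [MulAction G Ω] [FaithfulSMul G Ω] [MulAction.IsPretransitive G Ω]
    (hfrob : ∀ g : G, g ≠ 1 → ∀ α β : Ω, g • α = α → g • β = β → α = β)
    (ω : Ω) (K : Subgroup G)
    (hK : (K : Set G) = {1} ∪ {g : G | ∀ α : Ω, g • α ≠ α}) (hKnormal : K.Normal)
    (f : MulAction.stabilizer G ω → K) :
    IsCLSet G Ω {s : G | ∃ h : MulAction.stabilizer G ω, s = (f h : G) * (h : G)} := by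
  classical
  haveI : Nonempty Ω := ⟨ω⟩
  set N : ℂ := (Fintype.card Ω : ℂ) with hNdef
  have hN : N ≠ 0 := Nat.cast_ne_zero.mpr Fintype.card_ne_zero
  set φ : MulAction.stabilizer G ω → G := fun h => (f h : G) * (h : G) with hφdef
  -- K ∩ H = 1
  have hKH : ∀ y : G, y ∈ K → y • ω = ω → y = 1 := by
    intro y hyK hyω
    by_contra hy1
    have hmem : y ∈ ({1} ∪ {g : G | ∀ α : Ω, g • α ≠ α} : Set G) := by
      rw [← hK]; exact hyK
    rcases hmem with h | h
    · exact hy1 h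
    · exact h ω hyω
  have hφinj : Function.Injective φ := by
    intro h1 h2 heq
    have hy : ((f h2 : G))⁻¹ * (f h1 : G) = (h2 : G) * (h1 : G)⁻¹ := by
      have heq' : (f h1 : G) * (h1 : G) = (f h2 : G) * (h2 : G) := heq
      calc ((f h2 : G))⁻¹ * (f h1 : G)
          = (f h2 : G)⁻¹ * ((f h1 : G) * (h1 : G)) * (h1 : G)⁻¹ := by group
        _ = (f h2 : G)⁻¹ * ((f h2 : G) * (h2 : G)) * (h1 : G)⁻¹ := by rw [heq']
        _ = (h2 : G) * (h1 : G)⁻¹ := by group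
    have hyK : ((f h2 : G))⁻¹ * (f h1 : G) ∈ K := mul_mem (inv_mem (f h2).2) (f h1).2
    have hyH : ((h2 : G) * (h1 : G)⁻¹) • ω = ω := by
      have h1ω : (h1 : G) • ω = ω := h1.2
      have h2ω : (h2 : G) • ω = ω := h2.2
      have h1ω' : ((h1 : G))⁻¹ • ω = ω := by rw [inv_smul_eq_iff, h1ω]
      rw [mul_smul, h1ω', h2ω]
    have hyK' : (h2 : G) * (h1 : G)⁻¹ ∈ K := by rw [← hy]; exact hyK
    have : (h2 : G) * (h1 : G)⁻¹ = 1 := hKH _ hyK' hyH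
    have : (h2 : G) = (h1 : G) := by
      rw [mul_inv_eq_one] at this; exact this
    exact (Subtype.ext this).symm
  have key : indicatorVec {s : G | ∃ h : MulAction.stabilizer G ω, s = (f h : G) * (h : G)} =
      indicatorVec {g : G | g • ω = ω} +
        ∑ h : MulAction.stabilizer G ω, N⁻¹ •
          (∑ a : Ω, (indicatorVec {g : G | g • a = ((f h : G) * (h : G)) • a}
            - indicatorVec {g : G | g • a = (h : G) • a})) := by
    funext x
    simp only [indicatorVec, Set.indicator_apply, Pi.add_apply, Finset.sum_apply,
      Pi.smul_apply, Pi.sub_apply, smul_eq_mul, Set.mem_setOf_eq]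
    have hinner : ∀ h : MulAction.stabilizer G ω,
        (∑ a : Ω, ((if x • a = ((f h : G) * (h : G)) • a then (1 : ℂ) else 0)
          - (if x • a = (h : G) • a then 1 else 0))) =
        N * ((if x = (f h : G) * (h : G) then 1 else 0) - (if x = (h : G) then 1 else 0)) :=
      fun h => frob_stardiff hfrob K hK hKnormal x (h : G) (f h : G) (f h).2
    have hstep : ∀ h : MulAction.stabilizer G ω,
        N⁻¹ * (∑ a : Ω, ((if x • a = ((f h : G) * (h : G)) • a then (1 : ℂ) else 0)
          - (if x • a = (h : G) • a then 1 else 0))) =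
        (if x = (f h : G) * (h : G) then 1 else 0) - (if x = (h : G) then 1 else 0) := by
      intro h
      rw [hinner h, ← mul_assoc, inv_mul_cancel₀ hN, one_mul]
    calc (if ∃ h, x = (f h : G) * (h : G) then (1:ℂ) else 0)
        = (if x • ω = ω then (1:ℂ) else 0) +
            ((if ∃ h, x = (f h : G) * (h : G) then (1:ℂ) else 0)
              - (if x • ω = ω then (1:ℂ) else 0)) := by ring
      _ = (if x • ω = ω then (1:ℂ) else 0) +
            ∑ h : MulAction.stabilizer G ω,
              ((if x = (f h : G) * (h : G) then (1:ℂ) else 0)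
                - (if x = (h : G) then 1 else 0)) := by
          congr 1
          rw [Finset.sum_sub_distrib]
          congr 1
          · exact (sum_ite_eq_exists φ hφinj x).symm
          · rw [sum_ite_eq_exists (fun h : MulAction.stabilizer G ω => (h : G))
              (fun a b hab => Subtype.ext hab) x]
            have hiff : (∃ h : MulAction.stabilizer G ω, x = (h : G)) ↔ x • ω = ω := by
              constructor
              · rintro ⟨h, rfl⟩; exact h.2
              · intro hx; exact ⟨⟨x, hx⟩, rfl⟩
            simp only [hiff]
      _ = _ := by
          congr 1
          apply Finset.sum_congr rfl
          intro h _
          rw [← hstep h]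
  rw [IsCLSet, key]
  apply Submodule.add_mem
  · exact Submodule.subset_span ⟨ω, ω, rfl⟩
  · apply Submodule.sum_mem
    intro h _
    apply Submodule.smul_mem
    apply Submodule.sum_mem
    intro a _
    exact Submodule.sub_mem _
      (Submodule.subset_span ⟨a, ((f h : G) * (h : G)) • a, rfl⟩)
      (Submodule.subset_span ⟨a, (h : G) • a, rfl⟩)
end

section
/- Let G be a finite group acting faithfully and transitively on a finite set Ω such that no non-identity element of G fixes more than one point of Ω (i.e., G is a Frobenius permutation group). Let H = G_ω be the stabilizer of a point ω ∈ Ω (the Frobenius complement), and suppose K, the set consisting of the identity together with all derangements of G, is a normal subgroup of G (the Frobenius kernel). If L is a minimal (G,Ω)-Cameron–Liebler set (a nonempty CL set having no nonempty CL set as a proper subset), then there is a function f : H → K such that L = { f(h)·h : h ∈ H }. -/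
open Finset

lemma CLaux.mem_span_of_forall_dual {V : Type*} [AddCommGroup V] [Module ℂ V] (S : Set V) (w : V)
    (h : ∀ φ : Module.Dual ℂ V, (∀ s ∈ S, φ s = 0) → φ w = 0) :
    w ∈ Submodule.span ℂ S := by
  rw [← Subspace.forall_mem_dualAnnihilator_apply_eq_zero_iff]
  intro φ hφ
  rw [Submodule.mem_dualAnnihilator] at hφ
  exact h φ fun s hs => hφ s (Submodule.subset_span hs)

lemma CLaux.dual_apply {G : Type*} [Fintype G] [DecidableEq G]
    (φ : Module.Dual ℂ (G → ℂ)) (f : G → ℂ) :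
    φ f = ∑ g : G, f g * φ (Pi.single g 1) := by
  conv_lhs => rw [← Finset.univ_sum_single f]
  rw [map_sum]
  refine Finset.sum_congr rfl fun g _ => ?_
  have : Pi.single g (f g) = f g • (Pi.single g (1 : ℂ) : G → ℂ) := by
    rw [← Pi.single_smul, smul_eq_mul, mul_one]
  rw [this, map_smul, smul_eq_mul]

lemma CLaux.dual_indicator {G : Type*} [Fintype G] [DecidableEq G]
    (φ : Module.Dual ℂ (G → ℂ)) (S : Set G) [DecidablePred (· ∈ S)] :
    φ (indicatorVec S) = ∑ g : G, if g ∈ S then φ (Pi.single g 1) else 0 := by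
  rw [CLaux.dual_apply]
  refine Finset.sum_congr rfl fun g _ => ?_
  by_cases hg : g ∈ S <;> simp [indicatorVec, Set.indicator, hg]

lemma CLaux.sum_param {G : Type*} [Fintype G] [DecidableEq G] {ι : Type*} [Fintype ι]
    [DecidableEq ι] (e : ι → G) (he : Function.Injective e) (u : G → ℂ) :
    (∑ g : G, if g ∈ {g : G | ∃ i, g = e i} then u g else 0) = ∑ i, u (e i) := by
  classical
  rw [← Finset.sum_filter]
  have himg : (Finset.univ.filter fun g : G => g ∈ {g : G | ∃ i, g = e i})
      = Finset.univ.image e := by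
    ext g
    simp only [Finset.mem_filter, Finset.mem_univ, true_and, Finset.mem_image,
      Set.mem_setOf_eq]
    constructor
    · rintro ⟨i, hi⟩; exact ⟨i, hi.symm⟩
    · rintro ⟨i, hi⟩; exact ⟨i, hi.symm⟩
  rw [himg, Finset.sum_image fun i _ j _ h => he h]


/-- Let `G` be a finite Frobenius permutation group on `Ω` (faithful, transitive, and no
non-identity element fixes more than one point), let `H = G_ω` be a point stabilizer (the
Frobenius complement) and let `K`, the identity together with all derangements, be a normal
subgroup of `G` (the Frobenius kernel).  If `L` is a minimal `(G,Ω)`-Cameron–Liebler set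
(a nonempty CL set with no nonempty CL set as a proper subset), then `L = {f(h)·h : h ∈ H}`
for some function `f : H → K`. -/
theorem frobenius_minimal_clSet_eq_transversal {G : Type*} [Group G] [Fintype G]
    {Ω : Type*} [Fintype Ω]
    [MulAction G Ω] [FaithfulSMul G Ω] [MulAction.IsPretransitive G Ω]
    (hfrob : ∀ g : G, g ≠ 1 → ∀ α β : Ω, g • α = α → g • β = β → α = β)
    (ω : Ω) (K : Subgroup G)
    (hK : (K : Set G) = {1} ∪ {g : G | ∀ α : Ω, g • α ≠ α}) (hKnormal : K.Normal)
    (L : Set G) (hL : IsCLSet G Ω L) (hne : L.Nonempty)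
    (hmin : ∀ L' : Set G, IsCLSet G Ω L' → L'.Nonempty → L' ⊆ L → L' = L) :
    ∃ f : MulAction.stabilizer G ω → K,
      L = {s : G | ∃ h : MulAction.stabilizer G ω, s = (f h : G) * (h : G)} := by
  classical
  set H := MulAction.stabilizer G ω with hH
  -- K basic facts
  have hK1 : ∀ k : G, k ∈ K → k ≠ 1 → ∀ α : Ω, k • α ≠ α := by
    intro k hk hkne α
    have : k ∈ (K : Set G) := hk
    rw [hK] at this
    rcases this with h1 | hD
    · exact absurd h1 hkne
    · exact hD α
  have hKof : ∀ g : G, (∀ α : Ω, g • α ≠ α) → g ∈ K := by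
    intro g hg
    have : g ∈ (K : Set G) := by rw [hK]; exact Or.inr hg
    exact this
  have hfix : ∀ k : G, k ∈ K → ∀ α : Ω, k • α = α → k = 1 := by
    intro k hk α hα
    by_contra hne
    exact hK1 k hk hne α hα
  have hfree : ∀ k₁ k₂ : G, k₁ ∈ K → k₂ ∈ K → ∀ α : Ω, k₁ • α = k₂ • α → k₁ = k₂ := by
    intro k₁ k₂ h1 h2 α hα
    have hmem : k₂⁻¹ * k₁ ∈ K := mul_mem (inv_mem h2) h1
    have : (k₂⁻¹ * k₁) • α = α := by
      rw [mul_smul, hα, ← mul_smul, inv_mul_cancel, one_smul]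
    exact (inv_mul_eq_one.mp (hfix _ hmem α this)).symm
  -- counting
  have hΩpos : 0 < Fintype.card Ω := Fintype.card_pos_iff.mpr ⟨ω⟩
  have horb : ∀ α : Ω, Fintype.card Ω * Fintype.card (MulAction.stabilizer G α)
      = Fintype.card G := by
    intro α
    have h1 := MulAction.card_orbit_mul_card_stabilizer_eq_card_group G α
    have h2 : Fintype.card (MulAction.orbit G α) = Fintype.card Ω := by
      have : MulAction.orbit G α = Set.univ := MulAction.orbit_eq_univ G α
      exact Fintype.card_congr ((Equiv.setCongr this).trans (Equiv.Set.univ Ω))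
    rwa [h2] at h1
  have hstabcard : ∀ α : Ω, Fintype.card (MulAction.stabilizer G α)
      = Fintype.card (MulAction.stabilizer G ω) := by
    intro α
    have := (horb α).trans (horb ω).symm
    exact Nat.eq_of_mul_eq_mul_left hΩpos this
  have hcard : Fintype.card {x : G // x ∈ K} = Fintype.card Ω := by
    have hdouble : ∑ α : Ω, (Finset.univ.filter fun g : G => g • α = α).card
        = ∑ g : G, (Finset.univ.filter fun α : Ω => g • α = α).card := by
      simp only [Finset.card_filter]
      rw [Finset.sum_comm]
    have hN1 : ∑ α : Ω, (Finset.univ.filter fun g : G => g • α = α).card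
        = Fintype.card G := by
      have : ∀ α : Ω, (Finset.univ.filter fun g : G => g • α = α).card
          = Fintype.card (MulAction.stabilizer G ω) := by
        intro α
        rw [← hstabcard α]
        rw [← Fintype.card_subtype]
        rfl
      rw [Finset.sum_congr rfl fun α _ => this α, Finset.sum_const, Finset.card_univ,
        smul_eq_mul, horb ω]
    have hN2 : ∑ g : G, (Finset.univ.filter fun α : Ω => g • α = α).card
        = Fintype.card Ω + (Fintype.card G - Fintype.card {x : G // x ∈ K}) := by
      rw [← Finset.add_sum_erase Finset.univ _ (Finset.mem_univ (1 : G))]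
      have hfix1 : (Finset.univ.filter fun α : Ω => (1 : G) • α = α).card
          = Fintype.card Ω := by
        simp
      rw [hfix1]
      congr 1
      have hterm : ∀ g ∈ Finset.univ.erase (1 : G),
          (Finset.univ.filter fun α : Ω => g • α = α).card
          = if g ∈ K then 0 else 1 := by
        intro g hg
        have hgne : g ≠ 1 := Finset.ne_of_mem_erase hg
        by_cases hgK : g ∈ K
        · simp only [hgK, if_true, Finset.card_eq_zero]
          rw [Finset.filter_eq_empty_iff]
          intro α _
          exact hK1 g hgK hgne α
        · simp only [hgK, if_false]
          have hex : ∃ α : Ω, g • α = α := by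
            by_contra hno
            push_neg at hno
            exact hgK (hKof g hno)
          obtain ⟨α0, hα0⟩ := hex
          rw [Finset.card_eq_one]
          refine ⟨α0, ?_⟩
          ext β
          simp only [Finset.mem_filter, Finset.mem_univ, true_and, Finset.mem_singleton]
          constructor
          · intro hβ
            exact (hfrob g hgne β α0 hβ hα0)
          · rintro rfl; exact hα0
      rw [Finset.sum_congr rfl hterm, Finset.sum_ite, Finset.sum_const, Finset.sum_const,
        smul_eq_mul, mul_zero, smul_eq_mul, mul_one, zero_add]
      have hfilter : (Finset.univ.erase (1 : G)).filter (fun x => ¬ x ∈ K)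
          = Finset.univ.filter (fun x => ¬ x ∈ K) := by
        ext g
        simp only [Finset.mem_filter, Finset.mem_erase, Finset.mem_univ, true_and, and_true]
        constructor
        · rintro ⟨_, h⟩; exact h
        · intro h
          exact ⟨fun h1 => h (h1 ▸ one_mem K), h⟩
      rw [hfilter]
      have hsplit := Finset.card_filter_add_card_filter_not
        (s := (Finset.univ : Finset G)) (p := fun x => x ∈ K)
      have hKcard : (Finset.univ.filter (fun x : G => x ∈ K)).card
          = Fintype.card {x : G // x ∈ K} := (Fintype.card_subtype _).symm
      rw [Finset.card_univ] at hsplit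
      omega
    have hKle : Fintype.card {x : G // x ∈ K} ≤ Fintype.card G :=
      Fintype.card_subtype_le _
    omega
  -- K is transitive from ω
  have hKt : ∀ β : Ω, ∃ k : {x : G // x ∈ K}, (k : G) • ω = β := by
    have hinj : Function.Injective (fun k : {x : G // x ∈ K} => (k : G) • ω) := by
      intro k k' hkk
      exact Subtype.ext (hfree _ _ k.2 k'.2 ω hkk)
    have hbij : Function.Bijective (fun k : {x : G // x ∈ K} => (k : G) • ω) :=
      (Fintype.bijective_iff_injective_and_card _).mpr ⟨hinj, hcard⟩
    intro β
    exact hbij.2 β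
  -- H membership
  have hHmem : ∀ g : G, g ∈ H ↔ g • ω = ω := fun g => MulAction.mem_stabilizer_iff
  -- unique decomposition g = k * h
  have hdec : ∀ g : G, ∃ k h : G, k ∈ K ∧ h ∈ H ∧ g = k * h := by
    intro g
    obtain ⟨k, hkω⟩ := hKt (g • ω)
    refine ⟨k, (k : G)⁻¹ * g, k.2, ?_, by group⟩
    rw [hHmem, mul_smul, ← hkω, inv_smul_smul]
  have huniq : ∀ k₁ h₁ k₂ h₂ : G, k₁ ∈ K → k₂ ∈ K → h₁ ∈ H → h₂ ∈ H →
      k₁ * h₁ = k₂ * h₂ → k₁ = k₂ ∧ h₁ = h₂ := by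
    intro k₁ h₁ k₂ h₂ hk₁ hk₂ hh₁ hh₂ heq
    have hkk : k₂⁻¹ * k₁ = h₂ * h₁⁻¹ := by
      have h0 : k₂⁻¹ * (k₁ * h₁) * h₁⁻¹ = k₂⁻¹ * (k₂ * h₂) * h₁⁻¹ := by rw [heq]
      calc k₂⁻¹ * k₁ = k₂⁻¹ * (k₁ * h₁) * h₁⁻¹ := by group
        _ = k₂⁻¹ * (k₂ * h₂) * h₁⁻¹ := h0
        _ = h₂ * h₁⁻¹ := by group
    have hmem : k₂⁻¹ * k₁ ∈ K := mul_mem (inv_mem hk₂) hk₁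
    have hfixes : (k₂⁻¹ * k₁) • ω = ω := by
      rw [hkk, mul_smul, (hHmem h₁⁻¹).mp (inv_mem hh₁), (hHmem h₂).mp hh₂]
    have h1 : k₂⁻¹ * k₁ = 1 := hfix _ hmem ω hfixes
    have hk : k₁ = k₂ := (inv_mul_eq_one.mp h1).symm
    refine ⟨hk, ?_⟩
    rw [hk] at heq
    exact mul_left_cancel heq
  -- Frobenius: elements of K commuting with nontrivial elements of H are trivial
  have hcomm : ∀ t : G, t ∈ H → t ≠ 1 → ∀ m : G, m ∈ K → t * m = m * t → m = 1 := by
    intro t ht htne m hm hcm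
    have h1 : t • (m • ω) = m • ω := by
      rw [← mul_smul, hcm, mul_smul, (hHmem t).mp ht]
    have h2 : t • ω = ω := (hHmem t).mp ht
    have := hfrob t htne ω (m • ω) h2 h1
    exact hfix m hm ω this.symm
  -- stars are the sets a•H•b
  have hstar : ∀ α β : Ω, ∃ a b : G, a ∈ K ∧ b ∈ K ∧
      {g : G | g • α = β} = {g : G | ∃ h : H, g = a * h * b} := by
    intro α β
    obtain ⟨p, hpω⟩ := hKt α
    obtain ⟨q, hqω⟩ := hKt β
    refine ⟨q, (p : G)⁻¹, q.2, inv_mem p.2, ?_⟩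
    ext g
    simp only [Set.mem_setOf_eq]
    constructor
    · intro hg
      have hmem : (q : G)⁻¹ * g * p ∈ H := by
        rw [hHmem, mul_smul, mul_smul, hpω, hg, ← hqω, inv_smul_smul]
      refine ⟨⟨_, hmem⟩, ?_⟩
      push_cast
      group
    · rintro ⟨h, rfl⟩
      have hh : (h : G) • ω = ω := (hHmem h).mp h.2
      rw [← hpω, ← hqω]
      rw [mul_smul, mul_smul, inv_smul_smul, hh]
  have hstar' : ∀ a b : G, a ∈ K → b ∈ K →
      {g : G | ∃ h : H, g = a * h * b} = {g : G | g • (b⁻¹ • ω) = a • ω} := by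
    intro a b ha hb
    ext g
    simp only [Set.mem_setOf_eq]
    constructor
    · rintro ⟨h, rfl⟩
      have hh : (h : G) • ω = ω := (hHmem h).mp h.2
      rw [smul_smul]
      rw [show a * (h : G) * b * b⁻¹ = a * (h : G) by group]
      rw [mul_smul, hh]
    · intro hg
      have hmem : a⁻¹ * g * b⁻¹ ∈ H := by
        rw [hHmem, mul_smul, mul_smul, hg, inv_smul_smul]
      refine ⟨⟨_, hmem⟩, by group⟩
  -- functionals vanishing on all stars are constant on the cosets K*h
  have hKne : Nonempty {x : G // x ∈ K} := ⟨⟨1, one_mem K⟩⟩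
  have hkey : ∀ u : G → ℂ,
      (∀ a b : G, a ∈ K → b ∈ K → ∑ h : H, u (a * h * b) = 0) →
      ∀ h0 : H, ∀ k k' : G, k ∈ K → k' ∈ K → u (k * h0) = u (k' * h0) := by
    intro u hvan h0 k k' hk hk'
    have main : ∀ a : G, a ∈ K →
        (Fintype.card {x : G // x ∈ K} : ℂ) * u (a * h0)
          + ∑ h ∈ Finset.univ.erase h0, (∑ b : {x : G // x ∈ K}, u (b * h)) = 0 := by
      intro a ha
      have hsum : ∑ b : {x : G // x ∈ K}, ∑ h : H,
          u ((a * ((h0 : G) * (b : G)⁻¹ * (h0 : G)⁻¹)) * h * b) = 0 := by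
        refine Finset.sum_eq_zero fun b _ => ?_
        exact hvan _ _ (mul_mem ha (hKnormal.conj_mem _ (inv_mem b.2) h0)) b.2
      rw [Finset.sum_comm] at hsum
      rw [← Finset.add_sum_erase Finset.univ _ (Finset.mem_univ h0)] at hsum
      have hterm0 : ∑ b : {x : G // x ∈ K},
          u ((a * ((h0:G) * (b:G)⁻¹ * (h0:G)⁻¹)) * (h0:G) * b)
          = (Fintype.card {x : G // x ∈ K} : ℂ) * u (a * h0) := by
        have heq : ∀ b : {x : G // x ∈ K},
            (a * ((h0:G) * (b:G)⁻¹ * (h0:G)⁻¹)) * (h0:G) * b = a * h0 := by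
          intro b; group
        rw [Finset.sum_congr rfl fun b _ => congrArg u (heq b)]
        rw [Finset.sum_const, Finset.card_univ, nsmul_eq_mul]
      have hterm : ∀ h : H, h ∈ Finset.univ.erase h0 →
          ∑ b : {x : G // x ∈ K}, u ((a * ((h0:G) * (b:G)⁻¹ * (h0:G)⁻¹)) * (h:G) * b)
          = ∑ b : {x : G // x ∈ K}, u (b * h) := by
        intro h hh
        have hne : h ≠ h0 := Finset.ne_of_mem_erase hh
        set t : G := (h0:G)⁻¹ * h with ht
        have htH : t ∈ H := mul_mem (inv_mem h0.2) h.2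
        have htne : t ≠ 1 := by
          intro h1
          rw [ht] at h1
          exact hne (Subtype.ext (inv_mul_eq_one.mp h1)).symm
        have hmem : ∀ b : {x : G // x ∈ K},
            (a * ((h0:G) * (b:G)⁻¹ * (h0:G)⁻¹)) * (h:G) * b * (h:G)⁻¹ ∈ K := by
          intro b
          have h1 : (a * ((h0:G) * (b:G)⁻¹ * (h0:G)⁻¹)) * (h:G) * b * (h:G)⁻¹
              = (a * ((h0:G) * (b:G)⁻¹ * (h0:G)⁻¹)) * ((h:G) * b * (h:G)⁻¹) := by group
          rw [h1]
          exact mul_mem (mul_mem ha (hKnormal.conj_mem _ (inv_mem b.2) h0))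
            (hKnormal.conj_mem _ b.2 h)
        set Φ : {x : G // x ∈ K} → {x : G // x ∈ K} :=
          fun b => ⟨(a * ((h0:G) * (b:G)⁻¹ * (h0:G)⁻¹)) * (h:G) * b * (h:G)⁻¹, hmem b⟩
          with hΦ
        have hinj : Function.Injective Φ := by
          intro b c hbc
          have hbc' : (a * ((h0:G) * (b:G)⁻¹ * (h0:G)⁻¹)) * (h:G) * b * (h:G)⁻¹
              = (a * ((h0:G) * (c:G)⁻¹ * (h0:G)⁻¹)) * (h:G) * c * (h:G)⁻¹ :=
            congrArg Subtype.val hbc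
          have h2 : ((a * (h0:G))⁻¹) * ((a * ((h0:G) * (b:G)⁻¹ * (h0:G)⁻¹)) * (h:G) * b * (h:G)⁻¹) * (h:G)
              = ((a * (h0:G))⁻¹) * ((a * ((h0:G) * (c:G)⁻¹ * (h0:G)⁻¹)) * (h:G) * c * (h:G)⁻¹) * (h:G) := by
            rw [hbc']
          have e1 : (b:G)⁻¹ * t * (b:G) = (c:G)⁻¹ * t * (c:G) := by
            rw [ht]
            calc (b:G)⁻¹ * ((h0:G)⁻¹ * h) * b
                = ((a * (h0:G))⁻¹) * ((a * ((h0:G) * (b:G)⁻¹ * (h0:G)⁻¹)) * (h:G) * b * (h:G)⁻¹) * (h:G) := by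
                  group
              _ = ((a * (h0:G))⁻¹) * ((a * ((h0:G) * (c:G)⁻¹ * (h0:G)⁻¹)) * (h:G) * c * (h:G)⁻¹) * (h:G) := h2
              _ = (c:G)⁻¹ * ((h0:G)⁻¹ * h) * c := by group
          have hcb : t * ((c:G) * (b:G)⁻¹) = ((c:G) * (b:G)⁻¹) * t := by
            calc t * ((c:G) * (b:G)⁻¹)
                = (c:G) * ((c:G)⁻¹ * t * c) * (b:G)⁻¹ := by group
              _ = (c:G) * ((b:G)⁻¹ * t * b) * (b:G)⁻¹ := by rw [e1]
              _ = ((c:G) * (b:G)⁻¹) * t := by group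
          have hone := hcomm t htH htne _ (mul_mem c.2 (inv_mem b.2)) hcb
          exact (Subtype.ext (mul_inv_eq_one.mp hone)).symm
        have hbijΦ : Function.Bijective Φ := Finite.injective_iff_bijective.mp hinj
        have hcompat : ∀ b : {x : G // x ∈ K},
            u ((a * ((h0:G) * (b:G)⁻¹ * (h0:G)⁻¹)) * (h:G) * b) = u ((Φ b : G) * h) := by
          intro b
          congr 1
          show _ = ((a * ((h0:G) * (b:G)⁻¹ * (h0:G)⁻¹)) * (h:G) * b * (h:G)⁻¹) * h
          group
        rw [Finset.sum_congr rfl fun b _ => hcompat b]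
        exact Fintype.sum_bijective Φ hbijΦ _ _ fun b => rfl
      rw [hterm0, Finset.sum_congr rfl hterm] at hsum
      exact hsum
    have h1 := main k hk
    have h2 := main k' hk'
    have hNne : (Fintype.card {x : G // x ∈ K} : ℂ) ≠ 0 := by
      exact_mod_cast Fintype.card_ne_zero (α := {x : G // x ∈ K})
    exact mul_left_cancel₀ hNne (add_right_cancel (h1.trans h2.symm))
  -- every transversal of the cosets K*h is a CL set
  have hCL_trans : ∀ f : H → {x : G // x ∈ K},
      IsCLSet G Ω {s : G | ∃ h : H, s = ((f h : G)) * (h : G)} := by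
    intro f
    apply CLaux.mem_span_of_forall_dual
    intro φ hφ0
    set u : G → ℂ := fun g => φ (Pi.single g 1) with hu
    have hvan : ∀ a b : G, a ∈ K → b ∈ K → ∑ h : H, u (a * h * b) = 0 := by
      intro a b ha hb
      have hset : {g : G | ∃ h : H, g = a * h * b} = {g : G | g • (b⁻¹ • ω) = a • ω} :=
        hstar' a b ha hb
      have h0 := hφ0 (indicatorVec {g : G | ∃ h : H, g = a * h * b})
        ⟨b⁻¹ • ω, a • ω, by rw [hset]⟩
      rw [CLaux.dual_indicator] at h0
      have hinj : Function.Injective (fun h : H => a * (h : G) * b) := by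
        intro h h' hhh
        simp only at hhh
        exact Subtype.ext (mul_left_cancel (mul_right_cancel hhh))
      rw [← CLaux.sum_param (fun h : H => a * (h : G) * b) hinj u]
      exact h0
    have hconst := hkey u hvan
    have hTinj : Function.Injective (fun h : H => ((f h : G)) * (h : G)) := by
      intro h h' hhh
      simp only at hhh
      exact Subtype.ext (huniq _ _ _ _ (f h).2 (f h').2 h.2 h'.2 hhh).2
    rw [show φ (indicatorVec {s : G | ∃ h : H, s = ((f h : G)) * (h : G)})
        = ∑ g : G, if g ∈ {s : G | ∃ h : H, s = ((f h : G)) * (h : G)} then u g else 0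
        from CLaux.dual_indicator φ _]
    rw [CLaux.sum_param _ hTinj u]
    have hswap : ∀ h : H, u ((f h : G) * (h : G)) = u (1 * (h : G)) := by
      intro h
      exact hconst h _ _ (f h).2 (one_mem K)
    rw [Finset.sum_congr rfl fun h _ => hswap h]
    have := hvan 1 1 (one_mem K) (one_mem K)
    rw [← this]
    exact Finset.sum_congr rfl fun h _ => by rw [mul_one]
  -- CL sets meet all cosets K*h in sets of the same size
  have hcount : ∀ (L' : Set G), IsCLSet G Ω L' → ∀ h h' : H,
      (Finset.univ.filter fun k : {x : G // x ∈ K} => ((k:G) * (h:G)) ∈ L').card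
      = (Finset.univ.filter fun k : {x : G // x ∈ K} => ((k:G) * (h':G)) ∈ L').card := by
    intro L' hL' h h'
    let φc : (G → ℂ) →ₗ[ℂ] ℂ := {
      toFun := fun f => (∑ k : {x : G // x ∈ K}, f ((k:G) * (h:G)))
        - ∑ k : {x : G // x ∈ K}, f ((k:G) * (h':G)),
      map_add' := by
        intro f g
        simp only [Pi.add_apply, Finset.sum_add_distrib]
        ring,
      map_smul' := by
        intro c f
        simp only [Pi.smul_apply, smul_eq_mul, RingHom.id_apply, ← Finset.mul_sum]
        ring }
    have hsum_one : ∀ (α β : Ω) (hh : H),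
        (∑ k : {x : G // x ∈ K}, indicatorVec {g : G | g • α = β} ((k:G) * (hh:G)))
        = 1 := by
      intro α β hh
      obtain ⟨a, b, ha, hb, hset⟩ := hstar α β
      have hk0mem : a * ((hh:G) * b * (hh:G)⁻¹) ∈ K :=
        mul_mem ha (hKnormal.conj_mem _ hb hh)
      set k0 : {x : G // x ∈ K} := ⟨a * ((hh:G) * b * (hh:G)⁻¹), hk0mem⟩ with hk0
      have hmem_iff : ∀ k : {x : G // x ∈ K},
          ((k:G) * (hh:G)) ∈ {g : G | g • α = β} ↔ k = k0 := by
        intro k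
        rw [hset]
        constructor
        · rintro ⟨htil, heq⟩
          have hdecomp : a * (htil:G) * b
              = (a * ((htil:G) * b * (htil:G)⁻¹)) * (htil:G) := by group
          rw [hdecomp] at heq
          have := huniq (k:G) (hh:G) (a * ((htil:G) * b * (htil:G)⁻¹)) (htil:G)
            k.2 (mul_mem ha (hKnormal.conj_mem _ hb htil)) hh.2 htil.2 heq
          apply Subtype.ext
          rw [this.1, ← this.2]
        · rintro rfl
          refine ⟨hh, ?_⟩
          show (a * ((hh:G) * b * (hh:G)⁻¹)) * (hh:G) = a * (hh:G) * b
          group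
      have : ∀ k : {x : G // x ∈ K},
          indicatorVec {g : G | g • α = β} ((k:G) * (hh:G))
          = if k = k0 then 1 else 0 := by
        intro k
        have hiff := hmem_iff k
        unfold indicatorVec
        rw [Set.indicator_apply]
        by_cases hk : k = k0
        · rw [if_pos (hiff.mpr hk), if_pos hk]
        · rw [if_neg (fun hc => hk (hiff.mp hc)), if_neg hk]
      rw [Finset.sum_congr rfl fun k _ => this k]
      simp
    have hφc0 : ∀ s ∈ {f : G → ℂ | ∃ α β : Ω, f = indicatorVec {g : G | g • α = β}},
        φc s = 0 := by
      rintro s ⟨α, β, rfl⟩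
      have hrfl : φc (indicatorVec {g : G | g • α = β})
          = (∑ k : {x : G // x ∈ K}, indicatorVec {g : G | g • α = β} ((k:G) * (h:G)))
            - ∑ k : {x : G // x ∈ K}, indicatorVec {g : G | g • α = β} ((k:G) * (h':G)) := rfl
      rw [hrfl, hsum_one α β h, hsum_one α β h']
      ring
    have hker : Submodule.span ℂ {f : G → ℂ | ∃ α β : Ω, f = indicatorVec {g : G | g • α = β}}
        ≤ LinearMap.ker φc :=
      Submodule.span_le.mpr fun s hs => LinearMap.mem_ker.mpr (hφc0 s hs)
    have hLker := hker hL'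
    rw [LinearMap.mem_ker] at hLker
    have hLeq : (∑ k : {x : G // x ∈ K}, indicatorVec L' ((k:G) * (h:G)))
        = ∑ k : {x : G // x ∈ K}, indicatorVec L' ((k:G) * (h':G)) :=
      sub_eq_zero.mp hLker
    have hcast : ∀ hh : H, (∑ k : {x : G // x ∈ K}, indicatorVec L' ((k:G) * (hh:G)))
        = ((Finset.univ.filter fun k : {x : G // x ∈ K} => ((k:G) * (hh:G)) ∈ L').card : ℂ) := by
      intro hh
      rw [Finset.card_filter]
      push_cast
      refine Finset.sum_congr rfl fun k _ => ?_
      by_cases hk : ((k:G) * (hh:G)) ∈ L' <;> simp [indicatorVec, Set.indicator, hk]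
    rw [hcast h, hcast h'] at hLeq
    exact_mod_cast hLeq
  -- every coset K*h meets L
  obtain ⟨g0, hg0⟩ := hne
  obtain ⟨k0, h0, hk0, hh0, hg0eq⟩ := hdec g0
  have hLcoset : ∀ h : H, ∃ k : {x : G // x ∈ K}, ((k:G) * (h:G)) ∈ L := by
    intro h
    have hc := hcount L hL (⟨h0, hh0⟩ : H) h
    have hpos : 0 < (Finset.univ.filter fun k : {x : G // x ∈ K} =>
        ((k:G) * ((⟨h0, hh0⟩ : H):G)) ∈ L).card := by
      refine Finset.card_pos.mpr ⟨⟨k0, hk0⟩, ?_⟩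
      rw [Finset.mem_filter]
      refine ⟨Finset.mem_univ _, ?_⟩
      show (k0 * h0) ∈ L
      rw [← hg0eq]
      exact hg0
    rw [hc] at hpos
    obtain ⟨k, hk⟩ := Finset.card_pos.mp hpos
    exact ⟨k, (Finset.mem_filter.mp hk).2⟩
  choose f hf using hLcoset
  refine ⟨f, ?_⟩
  have hTsub : {s : G | ∃ h : H, s = ((f h : G)) * (h : G)} ⊆ L := by
    rintro s ⟨h, rfl⟩
    exact hf h
  have hTne : Set.Nonempty {s : G | ∃ h : H, s = ((f h : G)) * (h : G)} :=
    ⟨(f 1 : G) * ((1 : H) : G), ⟨1, rfl⟩⟩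
  exact (hmin _ (hCL_trans f) hTne hTsub).symm
end

section
/- Let G be a finite group acting 2-transitively on a finite set Ω with |Ω| = n, and let der(G) be the number of derangements of G. Then for every g ∈ G and every pair a, b ∈ Ω: the number of elements h ∈ G such that g h⁻¹ is a derangement and h·a = b equals der(G)/(n−1) if g·a ≠ b, and equals 0 if g·a = b. -/
/-! The map `h ↦ g * h⁻¹` identifies the counted set with the derangements sending `b` to `g • a`.
Sorting all derangements by the image of `b`, the class over `b` is empty, and conjugation by the
stabiliser of `b`, which is transitive on `Ω \ {b}`, makes the other `n - 1` classes equinumerous. -/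

namespace IsDerangement

variable {G Ω : Type*} [Group G] [MulAction G Ω]

lemma conj {x : G} (hx : IsDerangement G Ω x) (k : G) : IsDerangement G Ω (k * x * k⁻¹) := by
  intro α hα
  apply hx (k⁻¹ • α)
  simpa [mul_smul] using congrArg (k⁻¹ • ·) hα

lemma conj_iff (x k : G) : IsDerangement G Ω (k * x * k⁻¹) ↔ IsDerangement G Ω x := by
  refine ⟨fun hx => ?_, fun hx => hx.conj k⟩
  simpa [mul_assoc] using hx.conj k⁻¹

end IsDerangement

section

variable (G : Type*) {Ω : Type*} [Group G] [MulAction G Ω]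

def derangementsMapsTo (b c : Ω) : Set G := {x : G | IsDerangement G Ω x ∧ x • b = c}

variable {G}

lemma derangementsMapsTo_self (b : Ω) : derangementsMapsTo G b b = ∅ :=
  Set.eq_empty_of_forall_notMem fun _ hx => hx.1 b hx.2

lemma card_derangementsMapsTo_congr {b c c' : Ω} {k : G} (hkb : k • b = b) (hkc : k • c = c') :
    Nat.card (derangementsMapsTo G b c) = Nat.card (derangementsMapsTo G b c') := by
  have hk_inv : k⁻¹ • b = b := by rw [inv_smul_eq_iff, hkb]
  refine Nat.card_congr ((MulAut.conj k).toEquiv.subtypeEquiv fun x => ?_)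
  simp only [derangementsMapsTo, Set.mem_ofPred_eq, MulEquiv.toEquiv_eq_coe, MulEquiv.coe_toEquiv,
    MulAut.conj_apply, IsDerangement.conj_iff, mul_smul, hk_inv, ← hkc, smul_left_cancel_iff]

lemma card_setOf_derangement_eq_sum [Finite G] [Fintype Ω] (b : Ω) :
    Nat.card {x : G | IsDerangement G Ω x} = ∑ c, Nat.card (derangementsMapsTo G b c) := by
  rw [← Nat.card_sigma]
  exact Nat.card_congr
    ((Equiv.sigmaFiberEquiv fun x : {x : G // IsDerangement G Ω x} => x.1 • b).symm.trans
      (Equiv.sigmaCongrRight fun c =>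
        Equiv.subtypeSubtypeEquivSubtypeInter (IsDerangement G Ω) (· • b = c)))

lemma card_setOf_derangement_eq_mul [Finite G] [Fintype Ω] {b c : Ω}
    (htrans : ∀ c', c' ≠ b → ∃ k : G, k • b = b ∧ k • c = c') :
    Nat.card {x : G | IsDerangement G Ω x} =
      (Fintype.card Ω - 1) * Nat.card (derangementsMapsTo G b c) := by
  classical
  have hfibers : ∀ c' ∈ Finset.univ.erase b,
      Nat.card (derangementsMapsTo G b c') = Nat.card (derangementsMapsTo G b c) := by
    intro c' hc'
    obtain ⟨k, hkb, hkc⟩ := htrans c' (Finset.ne_of_mem_erase hc')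
    exact (card_derangementsMapsTo_congr hkb hkc).symm
  rw [card_setOf_derangement_eq_sum b,
    ← Finset.sum_erase _ (a := b) (by simp [derangementsMapsTo_self]),
    Finset.sum_congr rfl hfibers,
    Finset.sum_const, Finset.card_erase_of_mem (Finset.mem_univ b), Finset.card_univ, smul_eq_mul]

lemma card_setOf_derangement_mul_inv (g : G) (a b : Ω) :
    Nat.card {h : G | IsDerangement G Ω (g * h⁻¹) ∧ h • a = b} =
      Nat.card (derangementsMapsTo G b (g • a)) := by
  refine Nat.card_congr (((Equiv.inv G).trans (Equiv.mulLeft g)).subtypeEquiv fun h => ?_)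
  simp only [derangementsMapsTo, Set.mem_ofPred_eq, Equiv.trans_apply, Equiv.inv_apply,
    Equiv.coe_mulLeft, mul_smul, smul_left_cancel_iff, inv_smul_eq_iff, @eq_comm _ b]

end

/-- Let `G` act 2-transitively on a finite set `Ω` with `|Ω| = n` and let `der(G)` be the number
of derangements in `G`.  For `g ∈ G` and `a, b ∈ Ω`, the number of `h ∈ G` with `g h⁻¹` a
derangement and `h·a = b` is `der(G)/(n-1)` if `g·a ≠ b`, and `0` if `g·a = b`. -/
theorem count_derangement_neighbours_star {G : Type*} [Group G] [Fintype G]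
    {Ω : Type*} [Fintype Ω] [MulAction G Ω]
    (h2trans : ∀ a b c d : Ω, a ≠ b → c ≠ d → ∃ g : G, g • a = c ∧ g • b = d)
    (g : G) (a b : Ω) :
    (g • a ≠ b →
      Nat.card {h : G | IsDerangement G Ω (g * h⁻¹) ∧ h • a = b} * (Fintype.card Ω - 1)
        = Nat.card {x : G | IsDerangement G Ω x}) ∧
    (g • a = b →
      Nat.card {h : G | IsDerangement G Ω (g * h⁻¹) ∧ h • a = b} = 0) := by
  rw [card_setOf_derangement_mul_inv]
  refine ⟨fun hne => ?_, fun heq => ?_⟩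
  · rw [mul_comm,
      card_setOf_derangement_eq_mul fun c hc => h2trans b (g • a) b c hne.symm hc.symm]
  · simp [heq, derangementsMapsTo_self]
end

section
/- Let G be a finite group acting 2-transitively on a finite set Ω with |Ω| = n, and let L be a nonempty (G,Ω)-Cameron–Liebler set with parameter x = |L|·n/|G|. Then x ≥ 1; moreover, if x = 1, then L is an intersecting set of size |G|/n, i.e., any two elements g, h ∈ L satisfy g·α = h·α for some α ∈ Ω. -/
open Finset
open scoped Classical

section Aux

variable (G : Type*) [Group G] [Fintype G] (Ω : Type*) [Fintype Ω] [MulAction G Ω]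

/-- The star `G_{a→b}` as a finset. -/
noncomputable def starF (a b : Ω) : Finset G :=
  univ.filter fun g : G => g • a = b

/-- The set of derangements (elements acting with no fixed point). -/
noncomputable def derF : Finset G :=
  univ.filter fun σ : G => ∀ α : Ω, σ • α ≠ α

/-- Elements totally disagreeing with `g₀`. -/
noncomputable def accF (g₀ : G) : Finset G :=
  univ.filter fun g : G => ∀ α : Ω, g • α ≠ g₀ • α

variable {G Ω}

lemma mem_starF {a b : Ω} {g : G} : g ∈ starF G Ω a b ↔ g • a = b := by
  simp [starF]

lemma mem_derF {σ : G} : σ ∈ derF G Ω ↔ ∀ α : Ω, σ • α ≠ α := by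
  simp [derF]

lemma mem_accF {g₀ g : G} : g ∈ accF G Ω g₀ ↔ ∀ α : Ω, g • α ≠ g₀ • α := by
  simp [accF]

lemma starF_card_eq (htrans : ∀ a c : Ω, ∃ g : G, g • a = c) (a b c : Ω) :
    (starF G Ω a b).card = (starF G Ω a c).card := by
  obtain ⟨t, ht⟩ := htrans b c
  apply Finset.card_bij (fun g _ => t * g)
  · intro g hg
    rw [mem_starF] at hg ⊢
    rw [mul_smul, hg, ht]
  · intro g₁ _ g₂ _ h
    exact mul_left_cancel h
  · intro g hg
    rw [mem_starF] at hg
    refine ⟨t⁻¹ * g, ?_, by group⟩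
    rw [mem_starF, mul_smul, hg, inv_smul_eq_iff]
    exact ht.symm

lemma card_starF (htrans : ∀ a c : Ω, ∃ g : G, g • a = c) (a b : Ω) :
    (starF G Ω a b).card * Fintype.card Ω = Fintype.card G := by
  have h1 : ∑ c : Ω, (starF G Ω a c).card = Fintype.card G := by
    simp only [starF, Finset.card_filter]
    rw [Finset.sum_comm]
    simp [Finset.sum_ite_eq]
  have h2 : ∑ c : Ω, (starF G Ω a c).card = Fintype.card Ω * (starF G Ω a b).card := by
    rw [Finset.sum_congr rfl fun c _ => starF_card_eq htrans a c b]
    simp [Finset.sum_const, Finset.card_univ]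
  rw [mul_comm, ← h2, h1]

lemma exists_derangement (htrans : ∀ a c : Ω, ∃ g : G, g • a = c)
    (hn : 2 ≤ Fintype.card Ω) : ∃ σ : G, ∀ α : Ω, σ • α ≠ α := by
  by_contra hcon
  push_neg at hcon
  have hn0 : 0 < Fintype.card Ω := by omega
  have hsum : ∑ σ : G, (univ.filter fun α : Ω => σ • α = α).card = Fintype.card G := by
    have hswap : ∑ σ : G, (univ.filter fun α : Ω => σ • α = α).card
        = ∑ α : Ω, (starF G Ω α α).card := by
      simp only [Finset.card_filter, starF]
      rw [Finset.sum_comm]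
    have hmul : (∑ α : Ω, (starF G Ω α α).card) * Fintype.card Ω
        = Fintype.card G * Fintype.card Ω := by
      rw [Finset.sum_mul]
      rw [Finset.sum_congr rfl fun α _ => card_starF htrans α α]
      simp [Finset.sum_const, Finset.card_univ, mul_comm]
    rw [hswap]
    exact Nat.eq_of_mul_eq_mul_right hn0 hmul
  have hlt : ∑ σ : G, (1 : ℕ) < ∑ σ : G, (univ.filter fun α : Ω => σ • α = α).card := by
    apply Finset.sum_lt_sum
    · intro σ _
      obtain ⟨α, hα⟩ := hcon σ
      exact Finset.card_pos.mpr ⟨α, by simp [hα]⟩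
    · refine ⟨1, mem_univ 1, ?_⟩
      have : (univ.filter fun α : Ω => (1 : G) • α = α) = (univ : Finset Ω) := by
        simp [one_smul]
      rw [this, Finset.card_univ]
      omega
  simp only [Finset.sum_const, Finset.card_univ, smul_eq_mul, mul_one] at hlt
  omega

lemma derF_star_const
    (h2trans : ∀ a b c d : Ω, a ≠ b → c ≠ d → ∃ g : G, g • a = c ∧ g • b = d)
    {a b c d : Ω} (hab : a ≠ b) (hcd : c ≠ d) :
    (derF G Ω ∩ starF G Ω a b).card = (derF G Ω ∩ starF G Ω c d).card := by
  obtain ⟨h, hac, hbd⟩ := h2trans a b c d hab hcd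
  apply Finset.card_bij (fun σ _ => h * σ * h⁻¹)
  · intro σ hσ
    rw [Finset.mem_inter, mem_derF, mem_starF] at hσ ⊢
    obtain ⟨h1, h2⟩ := hσ
    constructor
    · intro α heq
      apply h1 (h⁻¹ • α)
      rw [mul_smul, mul_smul] at heq
      conv_rhs => rw [← heq]
      rw [inv_smul_smul]
    · rw [mul_smul, mul_smul, ← hac, inv_smul_smul, h2, hbd]
  · intro σ₁ _ σ₂ _ hEq
    have := mul_right_cancel hEq
    exact mul_left_cancel this
  · intro τ hτ
    rw [Finset.mem_inter, mem_derF, mem_starF] at hτ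
    obtain ⟨h1, h2⟩ := hτ
    refine ⟨h⁻¹ * τ * h, ?_, by group⟩
    rw [Finset.mem_inter, mem_derF, mem_starF]
    constructor
    · intro α heq
      apply h1 (h • α)
      rw [mul_smul, mul_smul] at heq
      conv_rhs => rw [← heq]
      rw [smul_inv_smul]
    · rw [mul_smul, mul_smul, hac, h2, ← hbd, inv_smul_smul]

end Aux

section Key

variable {G : Type*} [Group G] [Fintype G] {Ω : Type*} [Fintype Ω] [MulAction G Ω]

lemma sum_indicator_mul {G : Type*} [Fintype G] (S : Set G) (v : G → ℂ) :
    ∑ g : G, indicatorVec S g * v g = ∑ g ∈ univ.filter (fun g => g ∈ S), v g := by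
  rw [Finset.sum_filter]
  refine Finset.sum_congr rfl fun g _ => ?_
  by_cases h : g ∈ S <;> simp [indicatorVec, Set.indicator_apply, h]

lemma derF_star_pos
    (h2trans : ∀ a b c d : Ω, a ≠ b → c ≠ d → ∃ g : G, g • a = c ∧ g • b = d)
    (hn : 2 ≤ Fintype.card Ω) {a₁ b₁ : Ω} (h₁ : a₁ ≠ b₁) :
    0 < (derF G Ω ∩ starF G Ω a₁ b₁).card := by
  have htrans : ∀ a c : Ω, ∃ g : G, g • a = c := by
    intro a c
    obtain ⟨b, hb⟩ := Fintype.exists_ne_of_one_lt_card (by omega) a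
    obtain ⟨e, he⟩ := Fintype.exists_ne_of_one_lt_card (by omega) c
    obtain ⟨g, hg, -⟩ := h2trans a b c e (Ne.symm hb) (Ne.symm he)
    exact ⟨g, hg⟩
  obtain ⟨σ, hσ⟩ := exists_derangement htrans hn
  have h2 : (derF G Ω ∩ starF G Ω a₁ (σ • a₁)).card
      = (derF G Ω ∩ starF G Ω a₁ b₁).card :=
    derF_star_const h2trans (Ne.symm (hσ a₁)) h₁
  rw [← h2]
  refine Finset.card_pos.mpr ⟨σ, ?_⟩
  rw [Finset.mem_inter, mem_derF, mem_starF]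
  exact ⟨hσ, rfl⟩

lemma accF_star_card
    (h2trans : ∀ a b c d : Ω, a ≠ b → c ≠ d → ∃ g : G, g • a = c ∧ g • b = d)
    {g₀ : G} {a b : Ω} (hb : b ≠ g₀ • a) {a₁ b₁ : Ω} (h₁ : a₁ ≠ b₁) :
    (accF G Ω g₀ ∩ starF G Ω a b).card = (derF G Ω ∩ starF G Ω a₁ b₁).card := by
  have key : (accF G Ω g₀ ∩ starF G Ω a b).card
      = (derF G Ω ∩ starF G Ω a (g₀⁻¹ • b)).card := by
    apply Finset.card_bij (fun g _ => g₀⁻¹ * g)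
    · intro g hg
      rw [Finset.mem_inter, mem_accF, mem_starF] at hg
      obtain ⟨h1, h2⟩ := hg
      rw [Finset.mem_inter, mem_derF, mem_starF]
      constructor
      · intro α heq
        apply h1 α
        rw [mul_smul, inv_smul_eq_iff] at heq
        exact heq
      · rw [mul_smul, h2]
    · intro g₁ _ g₂ _ hEq
      exact mul_left_cancel hEq
    · intro σ hσ
      rw [Finset.mem_inter, mem_derF, mem_starF] at hσ
      obtain ⟨h1, h2⟩ := hσ
      refine ⟨g₀ * σ, ?_, by group⟩
      rw [Finset.mem_inter, mem_accF, mem_starF]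
      constructor
      · intro α heq
        apply h1 α
        rw [mul_smul] at heq
        exact smul_left_cancel g₀ heq
      · rw [mul_smul, h2, smul_inv_smul]
  rw [key]
  refine derF_star_const h2trans (fun h => hb ?_) h₁
  rw [h, smul_inv_smul]

lemma key_identity
    (h2trans : ∀ a b c d : Ω, a ≠ b → c ≠ d → ∃ g : G, g • a = c ∧ g • b = d)
    (hn : 2 ≤ Fintype.card Ω)
    {L : Set G} (hL : IsCLSet G Ω L) {a₁ b₁ : Ω} (h₁ : a₁ ≠ b₁)
    (g₀ : G) (hg₀ : g₀ ∈ L) :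
    Fintype.card G * (derF G Ω ∩ starF G Ω a₁ b₁).card
      + Fintype.card G * ((univ.filter (fun g => g ∈ L)) ∩ accF G Ω g₀).card
    = Fintype.card Ω * (univ.filter (fun g : G => g ∈ L)).card
        * (derF G Ω ∩ starF G Ω a₁ b₁).card := by
  have htrans : ∀ a c : Ω, ∃ g : G, g • a = c := by
    intro a c
    obtain ⟨b, hb⟩ := Fintype.exists_ne_of_one_lt_card (by omega) a
    obtain ⟨e, he⟩ := Fintype.exists_ne_of_one_lt_card (by omega) c
    obtain ⟨g, hg, -⟩ := h2trans a b c e (Ne.symm hb) (Ne.symm he)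
    exact ⟨g, hg⟩
  set d : ℕ := (derF G Ω ∩ starF G Ω a₁ b₁).card with hd_def
  have hd0 : 0 < d := derF_star_pos h2trans hn h₁
  have hdC : ((d : ℂ)) ≠ 0 := by exact_mod_cast hd0.ne'
  have hN0 : 0 < Fintype.card G := Fintype.card_pos
  have hNC : ((Fintype.card G : ℂ)) ≠ 0 := by exact_mod_cast hN0.ne'
  set w : G → ℂ := fun g =>
    (if g = g₀ then 1 else 0) + (if g ∈ accF G Ω g₀ then (d : ℂ)⁻¹ else 0) with hw_def
  have hstarsum : ∀ a b : Ω, ∑ g ∈ starF G Ω a b, w g = 1 := by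
    intro a b
    rw [hw_def]
    rw [Finset.sum_add_distrib]
    by_cases hb : b = g₀ • a
    · have h1 : ∑ g ∈ starF G Ω a b, (if g = g₀ then (1 : ℂ) else 0) = 1 := by
        rw [Finset.sum_ite_eq' (starF G Ω a b) g₀ (fun _ => (1 : ℂ))]
        simp [mem_starF, hb]
      have h2 : ∑ g ∈ starF G Ω a b,
          (if g ∈ accF G Ω g₀ then (d : ℂ)⁻¹ else 0) = 0 := by
        refine Finset.sum_eq_zero fun g hg => ?_
        rw [mem_starF] at hg
        rw [if_neg]
        rw [mem_accF]
        push_neg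
        exact ⟨a, by rw [hg, hb]⟩
      rw [h1, h2, add_zero]
    · have h1 : ∑ g ∈ starF G Ω a b, (if g = g₀ then (1 : ℂ) else 0) = 0 := by
        rw [Finset.sum_ite_eq' (starF G Ω a b) g₀ (fun _ => (1 : ℂ))]
        rw [if_neg]
        rw [mem_starF]
        exact fun h => hb h.symm
      have h2 : ∑ g ∈ starF G Ω a b,
          (if g ∈ accF G Ω g₀ then (d : ℂ)⁻¹ else 0) = 1 := by
        rw [← Finset.sum_filter]
        rw [Finset.filter_mem_eq_inter, Finset.inter_comm]
        rw [Finset.sum_const]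
        rw [accF_star_card h2trans hb h₁, ← hd_def]
        simp [mul_comm]
        exact mul_inv_cancel₀ hdC
      rw [h1, h2, zero_add]
  -- the linear functional
  set c : ℂ := (Fintype.card Ω : ℂ) / (Fintype.card G : ℂ) with hc_def
  let φ : (G → ℂ) →ₗ[ℂ] ℂ :=
    { toFun := fun f => ∑ g : G, f g * (w g - c)
      map_add' := fun f₁ f₂ => by
        simp only [Pi.add_apply, add_mul]
        exact Finset.sum_add_distrib
      map_smul' := fun r f => by
        simp only [Pi.smul_apply, smul_eq_mul, RingHom.id_apply, Finset.mul_sum, mul_assoc] }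
  have hker : indicatorVec L ∈ LinearMap.ker φ := by
    refine Submodule.span_le.mpr ?_ hL
    rintro f ⟨a, b, rfl⟩
    simp only [SetLike.mem_coe, LinearMap.mem_ker]
    show ∑ g : G, indicatorVec {g : G | g • a = b} g * (w g - c) = 0
    rw [sum_indicator_mul]
    have hfil : (univ.filter fun g : G => g ∈ {g : G | g • a = b}) = starF G Ω a b := by
      ext g
      simp [starF, Set.mem_setOf_eq]
    rw [hfil, Finset.sum_sub_distrib, hstarsum a b, Finset.sum_const]
    have hcs : ((starF G Ω a b).card : ℂ) * (Fintype.card Ω : ℂ) = (Fintype.card G : ℂ) := by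
      exact_mod_cast congrArg (Nat.cast : ℕ → ℂ) (card_starF htrans a b)
    rw [nsmul_eq_mul, sub_eq_zero, hc_def, ← mul_div_assoc]
    rw [eq_div_iff hNC, one_mul]
    exact hcs.symm
  have heq0 : φ (indicatorVec L) = 0 := LinearMap.mem_ker.mp hker
  have heq1 : ∑ g ∈ univ.filter (fun g : G => g ∈ L), (w g - c) = 0 := by
    have hφ : φ (indicatorVec L) = ∑ g : G, indicatorVec L g * (w g - c) := rfl
    rw [hφ, sum_indicator_mul] at heq0
    exact heq0
  set LF := univ.filter (fun g : G => g ∈ L) with hLF_def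
  set m : ℕ := (LF ∩ accF G Ω g₀).card with hm_def
  have hg₀LF : g₀ ∈ LF := by simp [hLF_def, hg₀]
  have hsumw : ∑ g ∈ LF, w g = (LF.card : ℂ) * c := by
    rw [Finset.sum_sub_distrib] at heq1
    rw [sub_eq_zero] at heq1
    rw [heq1, Finset.sum_const, nsmul_eq_mul]
  have hsplit : ∑ g ∈ LF, w g = 1 + (m : ℂ) * (d : ℂ)⁻¹ := by
    rw [hw_def, Finset.sum_add_distrib]
    congr 1
    · rw [Finset.sum_ite_eq' LF g₀ (fun _ => (1 : ℂ)), if_pos hg₀LF]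
    · rw [← Finset.sum_filter, Finset.filter_mem_eq_inter, Finset.sum_const,
        nsmul_eq_mul, hm_def]
  have hcomb : 1 + (m : ℂ) * (d : ℂ)⁻¹
      = (LF.card : ℂ) * ((Fintype.card Ω : ℂ) / (Fintype.card G : ℂ)) := by
    rw [← hsplit, hsumw, hc_def]
  have hfinal : ((Fintype.card G * d + Fintype.card G * m : ℕ) : ℂ)
      = ((Fintype.card Ω * LF.card * d : ℕ) : ℂ) := by
    push_cast
    field_simp at hcomb
    linear_combination hcomb
  exact_mod_cast hfinal

end Key

/-- Let `G` act 2-transitively on a finite set `Ω` with `|Ω| = n` and let `L` be a nonempty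
`(G,Ω)`-Cameron–Liebler set with parameter `x = |L|·n/|G|`.  Then `x ≥ 1`; moreover if `x = 1`,
then `L` is an intersecting set of size `|G|/n`. -/
theorem cl_parameter_ge_one {G : Type*} [Group G] [Fintype G]
    {Ω : Type*} [Fintype Ω] [MulAction G Ω]
    (h2trans : ∀ a b c d : Ω, a ≠ b → c ≠ d → ∃ g : G, g • a = c ∧ g • b = d)
    (L : Set G) (hL : IsCLSet G Ω L) (hne : L.Nonempty) :
    (1 : ℚ) ≤ Nat.card L * Fintype.card Ω / Fintype.card G ∧
      ((Nat.card L * Fintype.card Ω / Fintype.card G : ℚ) = 1 →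
        Nat.card L * Fintype.card Ω = Fintype.card G ∧
          ∀ g ∈ L, ∀ h ∈ L, ∃ α : Ω, g • α = h • α) := by
  obtain ⟨g₀, hg₀⟩ := hne
  have hN0 : 0 < Fintype.card G := Fintype.card_pos
  rcases Nat.lt_or_ge (Fintype.card Ω) 2 with hn2 | hn2
  · -- |Ω| ≤ 1
    rcases Nat.eq_zero_or_pos (Fintype.card Ω) with hn0 | hn0
    · -- |Ω| = 0 : contradiction
      exfalso
      have hΩ : IsEmpty Ω := Fintype.card_eq_zero_iff.mp hn0
      have hset : {f : G → ℂ | ∃ a b : Ω, f = indicatorVec {g : G | g • a = b}} = ∅ := by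
        ext f
        simp only [Set.mem_setOf_eq, Set.mem_empty_iff_false, iff_false]
        rintro ⟨a, -⟩
        exact hΩ.false a
      have hL' : indicatorVec L ∈ Submodule.span ℂ
          {f : G → ℂ | ∃ a b : Ω, f = indicatorVec {g : G | g • a = b}} := hL
      rw [hset, Submodule.span_empty, Submodule.mem_bot] at hL'
      have h1 : indicatorVec L g₀ = 0 := by rw [hL']; rfl
      rw [indicatorVec, Set.indicator_of_mem hg₀] at h1
      exact one_ne_zero h1
    · -- |Ω| = 1
      have hn1 : Fintype.card Ω = 1 := by omega
      obtain ⟨a₀, ha₀⟩ := Fintype.card_eq_one_iff.mp hn1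
      have hstar : ∀ a b : Ω, {g : G | g • a = b} = Set.univ := by
        intro a b
        ext g
        simp only [Set.mem_setOf_eq, Set.mem_univ, iff_true]
        rw [ha₀ (g • a), ha₀ b]
      have hsub : {f : G → ℂ | ∃ a b : Ω, f = indicatorVec {g : G | g • a = b}}
          ⊆ {indicatorVec (Set.univ : Set G)} := by
        rintro f ⟨a, b, rfl⟩
        simp [hstar a b]
      have hm : indicatorVec L ∈ Submodule.span ℂ {indicatorVec (Set.univ : Set G)} :=
        Submodule.span_mono hsub hL
      obtain ⟨r, hr⟩ := Submodule.mem_span_singleton.mp hm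
      have hr1 : r = 1 := by
        have h1 := congrFun hr g₀
        simpa [indicatorVec, Set.indicator_of_mem hg₀, Set.indicator_univ] using h1
      have hLuniv : L = Set.univ := by
        ext g
        simp only [Set.mem_univ, iff_true]
        have h1 := congrFun hr g
        rw [hr1, one_smul] at h1
        by_contra hg
        simp [indicatorVec, Set.indicator_apply, hg] at h1
      have hcard : Nat.card L = Fintype.card G := by
        rw [hLuniv]
        rw [Nat.card_congr (Equiv.Set.univ G), Nat.card_eq_fintype_card]
      rw [hcard, hn1]
      constructor
      · have hNQ : ((Fintype.card G : ℚ)) ≠ 0 := by exact_mod_cast hN0.ne'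
        rw [Nat.cast_one, mul_one, div_self hNQ]
      · intro _
        refine ⟨by rw [mul_one], ?_⟩
        intro g _ h _
        exact ⟨a₀, by rw [ha₀ (g • a₀), ha₀ (h • a₀)]⟩
  · -- main case : |Ω| ≥ 2
    have hΩne : Nonempty Ω := Fintype.card_pos_iff.mp (by omega)
    obtain ⟨a₁⟩ := hΩne
    obtain ⟨b₁, hb₁⟩ := Fintype.exists_ne_of_one_lt_card (by omega) a₁
    have h₁ : a₁ ≠ b₁ := Ne.symm hb₁
    have hkey := fun (g : G) (hg : g ∈ L) => key_identity h2trans hn2 hL h₁ g hg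
    set d : ℕ := (derF G Ω ∩ starF G Ω a₁ b₁).card with hd_def
    have hd0 : 0 < d := derF_star_pos h2trans hn2 h₁
    set LF := univ.filter (fun g : G => g ∈ L) with hLF_def
    have hcardL : Nat.card L = LF.card := by
      rw [Nat.card_eq_fintype_card, hLF_def]
      exact Fintype.card_subtype _
    have hmain := hkey g₀ hg₀
    have hle : Fintype.card G ≤ Fintype.card Ω * LF.card := by
      have h1 : Fintype.card G * d ≤ Fintype.card Ω * LF.card * d := by
        rw [← hmain]
        exact Nat.le_add_right _ _
      exact Nat.le_of_mul_le_mul_right h1 hd0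
    constructor
    · rw [hcardL, le_div_iff₀ (show (0:ℚ) < Fintype.card G by exact_mod_cast hN0), one_mul]
      exact_mod_cast Nat.mul_comm (Fintype.card Ω) LF.card ▸ hle
    · intro hx
      rw [hcardL] at hx ⊢
      have hxn : LF.card * Fintype.card Ω = Fintype.card G := by
        have h2 : (LF.card : ℚ) * (Fintype.card Ω : ℚ) = (Fintype.card G : ℚ) := by
          field_simp at hx
          exact_mod_cast hx
        exact_mod_cast h2
      refine ⟨hxn, ?_⟩
      intro g hg h hh
      have hgk := hkey g hg
      have h3 : Fintype.card Ω * LF.card * d = Fintype.card G * d := by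
        rw [mul_comm (Fintype.card Ω) LF.card, hxn]
      rw [h3] at hgk
      have hm0 : (LF ∩ accF G Ω g).card = 0 := by
        have hz : Fintype.card G * (LF ∩ accF G Ω g).card = 0 := by omega
        rcases Nat.mul_eq_zero.mp hz with hcase | hcase
        · omega
        · exact hcase
      have hnot : h ∉ accF G Ω g := by
        intro hmem
        have hmem2 : h ∈ LF ∩ accF G Ω g := Finset.mem_inter.mpr ⟨by simp [hLF_def, hh], hmem⟩
        rw [Finset.card_eq_zero] at hm0
        rw [hm0] at hmem2
        exact absurd hmem2 (Finset.notMem_empty h)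
      rw [mem_accF] at hnot
      push_neg at hnot
      obtain ⟨α, hα⟩ := hnot
      exact ⟨α, hα.symm⟩
end

section
/- Let G be a finite group acting 2-transitively on a finite set Ω, and let ψ be the irreducible complex character of G such that 1 + ψ is the permutation character of the action (ψ(g) = fix(g) − 1). Let L be a (G,Ω)-Cameron–Liebler set with parameter x, and let X ⊆ L and Y ⊆ G \ L be sets of equal size. Then L̄ := (L \ X) ∪ Y is a (G,Ω)-Cameron–Liebler set of parameter x if and only if for all g ∈ G, ψ(X g⁻¹) − ψ(Y g⁻¹) = (δ_X(g) − δ_Y(g)) · |G|/ψ(1), where δ_S(g) = 1 if g ∈ S and 0 otherwise. -/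
open scoped Pointwise Classical

/-- For a 2-transitive action, `ψ(g) = fix(g) − 1` is the irreducible character with
`1 + ψ` the permutation character. -/
noncomputable def psiChar (G : Type*) [Group G] (Ω : Type*) [Fintype Ω] [MulAction G Ω]
    (g : G) : ℂ :=
  (Nat.card {α : Ω | g • α = α} : ℂ) - 1


/-!
Put `f = 1_X - 1_Y`. As `X ⊆ L` and `Y ∩ L = ∅`, `1_{L̄} = 1_L - f`, so `L̄` is a CL set iff `f`
lies in the span `V` of the stars `v_{a,b}` (`starVec`), while the character condition says that
the convolution `(ψ ∗ f)(g) = ∑ₛ f(s) ψ(s g⁻¹)` (`psiConv`) equals `|G| f / ψ(1)`.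

Since `fix(s g⁻¹) = ∑_{a,b} v_{a,b}(s) v_{a,b}(g)`, the function `ψ ∗ f + (∑ f) • 1` always lies
in `V`. On the other hand, by 2-transitivity `|G_{a→b} ∩ G_{c→d}|` depends only on whether `a = c`
and whether `b = d`, which yields `(n - 1) (ψ ∗ f) = |G| f - (∑ f) • 1` on `V`, where `n = |Ω|`.
As `∑ f = 0` because `|X| = |Y|`, both directions follow for `n ≠ 1`. For `n = 1` the only CL sets
are `∅` and `G`, which forces `X = Y = ∅`.
-/

open Finset MulAction Function.Embedding

theorem sum_indicatorVec {α : Type*} [Fintype α] (X : Set α) :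
    ∑ s, indicatorVec X s = Nat.card X := by
  simp [indicatorVec, Set.indicator_apply, Nat.card_eq_fintype_card, Fintype.card_subtype]

theorem indicatorVec_diff_union {α : Type*} {L X Y : Set α} (hXL : X ⊆ L) (hYL : Y ⊆ Lᶜ) :
    indicatorVec ((L \ X) ∪ Y) = indicatorVec L - (indicatorVec X - indicatorVec Y) := by
  ext g
  by_cases hX : g ∈ X <;> by_cases hY : g ∈ Y <;> by_cases hL : g ∈ L <;>
    simp_all [indicatorVec, Set.subset_def]

theorem card_filter_smul_eq_mul_card {G : Type*} [Group G] [Fintype G] {X : Type*} [Fintype X]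
    [DecidableEq X] [MulAction G X] [IsPretransitive G X] (x y : X) :
    #{s : G | s • x = y} * Fintype.card X = Fintype.card G := by
  have hfibre (z : X) : #{s : G | s • x = z} = #{s : G | s • x = y} := by
    obtain ⟨g, rfl⟩ := exists_smul_eq G y z
    refine card_equiv (Equiv.mulLeft g⁻¹) fun s => ?_
    simp [mul_smul, inv_smul_eq_iff]
  calc _ = ∑ z : X, #{s : G | s • x = z} := by rw [mul_comm]; simp [hfibre]
    _ = Fintype.card G :=
      (card_eq_sum_card_fiberwise (f := (· • x)) (t := univ) fun _ _ => mem_univ _).symm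

section

variable {G : Type*} [Group G] {Ω : Type*} [MulAction G Ω]

theorem card_filter_smul_eq_and_smul_eq_mul [Fintype G] [Fintype Ω]
    [IsMultiplyPretransitive G Ω 2] {a b c d : Ω} (hac : a ≠ c) (hbd : b ≠ d) :
    #{s : G | s • a = b ∧ s • c = d} * (Fintype.card Ω * (Fintype.card Ω - 1)) =
      Fintype.card G := by
  have hpair : #{s : G | s • a = b ∧ s • c = d} =
      #{s : G | s • embFinTwo hac = embFinTwo hbd} := by
    congr! 2 with s
    simp [DFunLike.ext_iff, Fin.forall_fin_two, embFinTwo_apply_zero, embFinTwo_apply_one]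
  have hemb := card_filter_smul_eq_mul_card (G := G) (embFinTwo hac) (embFinTwo hbd)
  rw [Fintype.card_embedding_eq] at hemb
  simpa [hpair, Nat.descFactorial_succ, mul_comm] using hemb

theorem psiChar_one [Fintype Ω] : psiChar G Ω 1 = Fintype.card Ω - 1 := by
  simp [psiChar, Nat.card_eq_fintype_card]

theorem psiChar_mul_inv [Fintype Ω] (s g : G) :
    psiChar G Ω (s * g⁻¹) = ∑ a : Ω, (if s • a = g • a then 1 else 0) - 1 := by
  have hfix : Nat.card {α : Ω | (s * g⁻¹) • α = α} = #{a : Ω | s • a = g • a} := by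
    rw [← Fintype.card_subtype, ← Nat.card_eq_fintype_card]
    exact Nat.card_congr (Equiv.subtypeEquiv (toPerm g) fun a => by simp [mul_smul]).symm
  rw [psiChar, hfix, natCast_card_filter]

theorem finsum_mem_mul_singleton_inv [Fintype G] (φ : G → ℂ) (X : Set G) (g : G) :
    ∑ᶠ s ∈ X * {g⁻¹}, φ s = ∑ s, indicatorVec X s * φ (s * g⁻¹) := by
  rw [Set.mul_singleton, finsum_mem_image (mul_left_injective g⁻¹).injOn, finsum_mem_def,
    finsum_eq_sum_of_fintype]
  simp [indicatorVec, Set.indicator_apply]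

variable (G) in
noncomputable def starVec (a b : Ω) : G → ℂ :=
  indicatorVec {g : G | g • a = b}

variable (G Ω) in
def starSpan : Submodule ℂ (G → ℂ) :=
  Submodule.span ℂ {f | ∃ a b : Ω, f = starVec G a b}

theorem isCLSet_iff_mem_starSpan {L : Set G} :
    IsCLSet G Ω L ↔ indicatorVec L ∈ starSpan G Ω :=
  Iff.rfl

@[simp]
theorem starVec_apply (a b : Ω) (s : G) : starVec G a b s = if s • a = b then 1 else 0 := by
  simp [starVec, indicatorVec, Set.indicator_apply]

theorem sum_starVec_right [Fintype Ω] (a : Ω) (s : G) : ∑ b, starVec G a b s = 1 := by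
  simp

theorem sum_starVec_left [Fintype Ω] (b : Ω) (s : G) : ∑ a, starVec G a b s = 1 := by
  simp [← eq_inv_smul_iff]

theorem sum_starVec_mul_starVec [Fintype G] (a b c d : Ω) :
    ∑ s, starVec G a b s * starVec G c d s = #{s : G | s • a = b ∧ s • c = d} := by
  simp only [starVec_apply, ite_zero_mul_ite_zero, mul_one, natCast_card_filter]

theorem sum_sum_mul_starVec [Fintype Ω] (c d : Ω) (g : G) :
    ∑ a : Ω, ∑ b : Ω, ((if c = a ∧ d = b then (Fintype.card Ω : ℂ) else 0) -
        (if c = a then 1 else 0) - (if d = b then 1 else 0) + 1) * starVec G a b g =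
      Fintype.card Ω * starVec G c d g + Fintype.card Ω - 2 := by
  simp only [add_mul, sub_mul, sum_add_distrib, sum_sub_distrib, ite_mul, zero_mul, one_mul,
    ite_and, sum_ite_irrel, sum_const_zero, sum_ite_eq, mem_univ, if_true, sum_starVec_right,
    sum_starVec_left, sum_const, card_univ, nsmul_eq_mul, mul_one]
  ring

variable [Fintype G] [Fintype Ω]

variable (Ω) in
noncomputable def psiConv (f : G → ℂ) (g : G) : ℂ :=
  ∑ s, f s * psiChar G Ω (s * g⁻¹)

theorem psiConv_eq_sum_starVec (f : G → ℂ) (g : G) :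
    psiConv Ω f g =
      ∑ a : Ω, ∑ b : Ω, (∑ s, f s * starVec G a b s) * starVec G a b g - ∑ s, f s := by
  have hdiag (s : G) (a : Ω) :
      (if s • a = g • a then (1 : ℂ) else 0) = ∑ b, starVec G a b s * starVec G a b g := by
    simp [eq_comm]
  simp only [psiConv, psiChar_mul_inv, mul_sub, mul_one, sum_sub_distrib, hdiag, mul_sum, sum_mul]
  rw [sum_comm]
  refine congrArg (· - _) (sum_congr rfl fun a _ => ?_)
  rw [sum_comm]
  simp only [mul_assoc]

theorem psiConv_mem_starSpan {f : G → ℂ} (hf : ∑ s, f s = 0) : psiConv Ω f ∈ starSpan G Ω := by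
  have hexpand : psiConv Ω f = ∑ a : Ω, ∑ b : Ω, (∑ s, f s * starVec G a b s) • starVec G a b := by
    ext g
    simp only [psiConv_eq_sum_starVec, hf, sub_zero, Finset.sum_apply, Pi.smul_apply, smul_eq_mul]
  rw [hexpand]
  exact sum_mem fun a _ => sum_mem fun b _ =>
    Submodule.smul_mem _ _ (Submodule.subset_span ⟨a, b, rfl⟩)

theorem card_mul_sum_starVec_mul_starVec [IsMultiplyPretransitive G Ω 2] (a b c d : Ω) :
    (Fintype.card Ω : ℂ) * (Fintype.card Ω - 1) * ∑ s, starVec G a b s * starVec G c d s =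
      Fintype.card G * ((if a = c ∧ b = d then (Fintype.card Ω : ℂ) else 0) -
        (if a = c then 1 else 0) - (if b = d then 1 else 0) + 1) := by
  have : IsPretransitive G Ω := isPretransitive_of_is_two_pretransitive
  rw [sum_starVec_mul_starVec]
  by_cases hac : a = c <;> by_cases hbd : b = d
  · subst hac hbd
    simp only [and_self, if_true, ← card_filter_smul_eq_mul_card (G := G) a b]
    push_cast
    ring
  · subst hac
    have hempty : #{s : G | s • a = b ∧ s • a = d} = 0 :=
      card_eq_zero.mpr (filter_eq_empty_iff.mpr fun s _ h => hbd (h.1.symm.trans h.2))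
    simp [hbd, hempty]
  · subst hbd
    have hempty : #{s : G | s • a = b ∧ s • c = b} = 0 :=
      card_eq_zero.mpr (filter_eq_empty_iff.mpr fun s _ h =>
        hac (smul_left_cancel s (h.1.trans h.2.symm)))
    simp [hac, hempty]
  · have hn : 1 ≤ Fintype.card Ω := Fintype.card_pos_iff.mpr ⟨a⟩
    simp only [hac, hbd, false_and, if_false,
      ← card_filter_smul_eq_and_smul_eq_mul (G := G) hac hbd]
    push_cast [Nat.cast_sub hn]
    ring

theorem sub_one_mul_psiConv_starVec [IsMultiplyPretransitive G Ω 2] (c d : Ω) (g : G) :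
    ((Fintype.card Ω : ℂ) - 1) * psiConv Ω (starVec G c d) g =
      Fintype.card G * starVec G c d g - ∑ s, starVec G c d s := by
  have : IsPretransitive G Ω := isPretransitive_of_is_two_pretransitive
  have : Nonempty Ω := ⟨c⟩
  have hstar : (Fintype.card Ω : ℂ) * ∑ s, starVec G c d s = Fintype.card G := by
    rw [← card_filter_smul_eq_mul_card (G := G) c d, mul_comm]
    simp only [starVec_apply, ← natCast_card_filter, Nat.cast_mul]
  have hsum : (Fintype.card Ω : ℂ) * (Fintype.card Ω - 1) * ∑ a : Ω, ∑ b : Ω,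
      (∑ s, starVec G c d s * starVec G a b s) * starVec G a b g =
        Fintype.card G * (Fintype.card Ω * starVec G c d g + Fintype.card Ω - 2) := by
    rw [← sum_sum_mul_starVec, mul_sum, mul_sum]
    refine sum_congr rfl fun a _ => ?_
    rw [mul_sum, mul_sum]
    exact sum_congr rfl fun b _ => by
      rw [← mul_assoc, card_mul_sum_starVec_mul_starVec, mul_assoc]
  refine mul_left_cancel₀ (Nat.cast_ne_zero.mpr Fintype.card_ne_zero : (Fintype.card Ω : ℂ) ≠ 0) ?_
  rw [psiConv_eq_sum_starVec]
  linear_combination hsum - ((Fintype.card Ω : ℂ) - 2) * hstar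

theorem sub_one_mul_psiConv_of_mem_starSpan [IsMultiplyPretransitive G Ω 2] {f : G → ℂ}
    (hf : f ∈ starSpan G Ω) (g : G) :
    ((Fintype.card Ω : ℂ) - 1) * psiConv Ω f g = Fintype.card G * f g - ∑ s, f s := by
  induction hf using Submodule.span_induction generalizing g with
  | mem _ h =>
    obtain ⟨c, d, rfl⟩ := h
    exact sub_one_mul_psiConv_starVec c d g
  | zero => simp [psiConv]
  | add f₁ f₂ _ _ h₁ h₂ =>
    simp only [psiConv, Pi.add_apply, add_mul, sum_add_distrib] at h₁ h₂ ⊢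
    linear_combination h₁ g + h₂ g
  | smul r f _ h =>
    simp only [psiConv, Pi.smul_apply, smul_eq_mul, mul_assoc, ← mul_sum] at h ⊢
    linear_combination r * h g

theorem mem_starSpan_iff_psiConv_eq [IsMultiplyPretransitive G Ω 2] (hn : Fintype.card Ω ≠ 1)
    {f : G → ℂ} (hf : ∑ s, f s = 0) :
    f ∈ starSpan G Ω ↔ ∀ g, psiConv Ω f g = f g * Fintype.card G / (Fintype.card Ω - 1) := by
  have hn' : (Fintype.card Ω : ℂ) - 1 ≠ 0 := sub_ne_zero.mpr (by exact_mod_cast hn)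
  refine ⟨fun hfV g => ?_, fun hconv => ?_⟩
  · rw [eq_div_iff hn', mul_comm, sub_one_mul_psiConv_of_mem_starSpan hfV, hf, sub_zero, mul_comm]
  · have hG : (Fintype.card G : ℂ) ≠ 0 := Nat.cast_ne_zero.mpr Fintype.card_ne_zero
    have hfconv : f = (((Fintype.card Ω : ℂ) - 1) / Fintype.card G) • psiConv Ω f := by
      ext g
      rw [Pi.smul_apply, hconv g, smul_eq_mul]
      field_simp
    rw [hfconv]
    exact Submodule.smul_mem _ _ (psiConv_mem_starSpan hf)

theorem eq_empty_or_eq_univ_of_isCLSet [IsMultiplyPretransitive G Ω 2] (hn : Fintype.card Ω = 1)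
    {L : Set G} (hL : IsCLSet G Ω L) : L = ∅ ∨ L = Set.univ := by
  have hconst (g : G) : (Fintype.card G : ℂ) * indicatorVec L g = ∑ s, indicatorVec L s := by
    simpa [hn, sub_eq_zero] using (sub_one_mul_psiConv_of_mem_starSpan hL g).symm
  by_contra! h
  obtain ⟨⟨g, hg⟩, hL_ne⟩ := h
  obtain ⟨g', hg'⟩ := (Set.ne_univ_iff_exists_notMem L).mp hL_ne
  simpa [indicatorVec, hg, hg'] using (hconst g).trans (hconst g').symm

end

/-- Character-theoretic form of the switching technique: for a 2-transitive action of `G` on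
`Ω` with `1 + ψ` the permutation character, a CL set `L` of parameter `x`, and `X ⊆ L`,
`Y ⊆ G \ L` of equal size, `L̄ = (L \ X) ∪ Y` is a CL set of parameter `x` if and only if
`ψ(X g⁻¹) − ψ(Y g⁻¹) = (δ_X(g) − δ_Y(g))·|G|/ψ(1)` for all `g ∈ G`. -/
theorem switching_technique_char {G : Type*} [Group G] [Fintype G]
    {Ω : Type*} [Fintype Ω] [MulAction G Ω]
    (h2trans : ∀ a b c d : Ω, a ≠ b → c ≠ d → ∃ g : G, g • a = c ∧ g • b = d)
    (L X Y : Set G) (hL : IsCLSet G Ω L)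
    (hsize : Nat.card X = Nat.card Y)
    (hXL : X ⊆ L) (hYL : Y ⊆ Lᶜ) :
    IsCLSet G Ω ((L \ X) ∪ Y) ↔
      ∀ g : G,
        (∑ᶠ s ∈ X * ({g⁻¹} : Set G), psiChar G Ω s) -
            (∑ᶠ s ∈ Y * ({g⁻¹} : Set G), psiChar G Ω s) =
          ((if g ∈ X then 1 else 0) - (if g ∈ Y then 1 else 0)) *
            (Fintype.card G : ℂ) / psiChar G Ω 1 := by
  have : IsMultiplyPretransitive G Ω 2 :=
    is_two_pretransitive_iff.mpr fun hab hcd => h2trans _ _ _ _ hab hcd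
  set f : G → ℂ := indicatorVec X - indicatorVec Y
  have hf : ∑ s, f s = 0 := by
    simp only [f, Pi.sub_apply, sum_sub_distrib, sum_indicatorVec, hsize, sub_self]
  have hconv (g : G) : (∑ᶠ s ∈ X * {g⁻¹}, psiChar G Ω s) -
      (∑ᶠ s ∈ Y * {g⁻¹}, psiChar G Ω s) = psiConv Ω f g := by
    simp only [finsum_mem_mul_singleton_inv, psiConv, f, Pi.sub_apply, sub_mul, sum_sub_distrib]
  have hδ (g : G) : ((if g ∈ X then 1 else 0) - (if g ∈ Y then 1 else 0) : ℂ) = f g := by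
    simp [f, indicatorVec, Set.indicator_apply]
  rw [isCLSet_iff_mem_starSpan, indicatorVec_diff_union hXL hYL,
    Submodule.sub_mem_iff_right (p := starSpan G Ω) hL]
  simp only [hconv, hδ, psiChar_one]
  rcases eq_or_ne (Fintype.card Ω) 1 with hn | hn
  · have hXY : X = ∅ ∧ Y = ∅ := by
      rcases eq_empty_or_eq_univ_of_isCLSet hn hL with rfl | rfl
      · obtain rfl := Set.subset_empty_iff.mp hXL
        simpa [Set.eq_empty_iff_forall_notMem] using hsize.symm
      · obtain rfl : Y = ∅ := by simpa using hYL
        simpa [Set.eq_empty_iff_forall_notMem] using hsize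
    simp [f, hXY.1, hXY.2, indicatorVec, psiConv]
  · exact mem_starSpan_iff_psiConv_eq hn hf
end

section
/- Let F be a finite field of order q, let V be an F-vector space of dimension n ≥ 2, and let G₀ ≤ GL(V) act transitively on the nonzero vectors of V. Let G = V ⋊ G₀ act 2-transitively on V by (v,g)·w = v + g(w), and let ψ be the irreducible character of G with 1 + ψ the permutation character of this action. Let W < V be a hyperplane, S = {g ∈ G₀ : g(W) = W}, and H = W⋊S ≤ G. Then ⟨ψ, Ind_H^G(1_H)⟩ = 1, i.e., ψ occurs with multiplicity exactly one in the character of G induced from the trivial character of H. -/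
open scoped Classical

/-- The affine group `G = V ⋊ G₀` attached to a subgroup `G₀ ≤ GL(V)`: the group of affine
equivalences `w ↦ v + g(w)` of `V` with `v ∈ V` and linear part `g ∈ G₀`. -/
def affGroup {F V : Type*} [Field F] [AddCommGroup V] [Module F V]
    (G₀ : Subgroup (V ≃ₗ[F] V)) : Subgroup (V ≃ᵃ[F] V) :=
  G₀.comap (AffineEquiv.linearHom : (V ≃ᵃ[F] V) →* V ≃ₗ[F] V)

/-- For the 2-transitive action of `G = V ⋊ G₀` on `V`, the function `ψ(g) = fix(g) − 1`;
`1 + ψ` is the permutation character and `ψ` is its irreducible part. -/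
noncomputable def affPsi {F V : Type*} [Field F] [AddCommGroup V] [Module F V]
    (G₀ : Subgroup (V ≃ₗ[F] V)) (e : affGroup G₀) : ℂ :=
  (Nat.card {w : V | (e : V ≃ᵃ[F] V) w = w} : ℂ) - 1

/-- The character of `G = V ⋊ G₀` induced from the trivial character of (the subgroup with
underlying set) `H`: `Ind_H^G(1_H)(g) = (1/|H|) Σ_{x ∈ G} 1_H(x⁻¹ g x)`. -/
noncomputable def affIndTrivial {F V : Type*} [Field F] [AddCommGroup V] [Module F V]
    (G₀ : Subgroup (V ≃ₗ[F] V)) (H : Set (affGroup G₀)) (g : affGroup G₀) : ℂ :=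
  (Nat.card H : ℂ)⁻¹ * ∑ᶠ x : affGroup G₀, if x⁻¹ * g * x ∈ H then 1 else 0

/-- The standard inner product of class functions on the finite group `G = V ⋊ G₀`. -/
noncomputable def affClassInner {F V : Type*} [Field F] [AddCommGroup V] [Module F V]
    (G₀ : Subgroup (V ≃ₗ[F] V)) (a b : affGroup G₀ → ℂ) : ℂ :=
  (Nat.card (affGroup G₀) : ℂ)⁻¹ * ∑ᶠ g : affGroup G₀, a g * (starRingEnd ℂ) (b g)

/-!
By Frobenius reciprocity `⟨ψ, Ind_H^G 1⟩` is the average of `ψ = fix - 1` over `H`, which by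
Burnside's lemma is the number of `H`-orbits on `V` minus one. Now `H = W ⋊ S` has exactly two
orbits, `W` and `V ∖ W`: translations by `W` move freely inside `W`, and `S` induces every nonzero
scalar on the line `V / W`, because `G₀` is transitive on nonzero linear forms. That last fact
comes from transitivity on nonzero vectors: `g` and its contragredient fix equally many points
(the kernels of `g - 1` and of its transpose have the same dimension), so by Burnside `G₀` has as
many orbits on the dual as on `V`, namely two.
-/

open MulAction Module Pointwise

instance LinearMap.instFinite {R M N : Type*} [Semiring R] [AddCommMonoid M] [Module R M]
    [AddCommMonoid N] [Module R N] [Finite M] [Finite N] : Finite (M →ₗ[R] N) :=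
  Finite.of_injective _ DFunLike.coe_injective

instance LinearEquiv.instFinite {R M : Type*} [Semiring R] [AddCommMonoid M] [Module R M]
    [Finite M] : Finite (M ≃ₗ[R] M) :=
  Finite.of_injective _ LinearEquiv.toEquiv_injective

instance AffineEquiv.instFinite {k V P : Type*} [Ring k] [AddCommGroup V] [Module k V]
    [AddTorsor V P] [Finite P] : Finite (P ≃ᵃ[k] P) :=
  Finite.of_injective _ AffineEquiv.toEquiv_injective

instance LinearEquiv.dualMulAction (R M : Type*) [CommSemiring R] [AddCommMonoid M]
    [Module R M] : MulAction (M ≃ₗ[R] M) (Dual R M) where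
  smul g φ := φ ∘ₗ g.symm.toLinearMap
  one_smul _ := rfl
  mul_smul _ _ _ := rfl

theorem LinearEquiv.dual_smul_apply {R M : Type*} [CommSemiring R] [AddCommMonoid M]
    [Module R M] (g : M ≃ₗ[R] M) (φ : Dual R M) (x : M) : (g • φ) x = φ (g.symm x) := rfl

instance AffineEquiv.applyMulAction {k V P : Type*} [Ring k] [AddCommGroup V] [Module k V]
    [AddTorsor V P] : MulAction (P ≃ᵃ[k] P) P where
  smul e p := e p
  one_smul _ := rfl
  mul_smul _ _ _ := rfl

theorem Equiv.image_eq_self_iff {α : Type*} (e : α ≃ α) (s : Set α) :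
    e '' s = s ↔ ∀ x, e x ∈ s ↔ x ∈ s := by
  rw [← e.eq_preimage_iff_image_eq, Set.ext_iff]
  exact forall_congr' fun _ => iff_comm

namespace MulAction

variable {K X : Type*} [Group K] [MulAction K X]

theorem natCard_orbitRel_quotient_eq_two (p : X → Prop) (hp : ∀ (k : K) x, p (k • x) ↔ p x)
    (hpre : ∀ x y, (p x ↔ p y) → ∃ k : K, k • x = y) (hpos : ∃ x, p x) (hneg : ∃ x, ¬ p x) :
    Nat.card (orbitRel.Quotient K X) = 2 := by
  let f : orbitRel.Quotient K X → Bool :=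
    Quotient.lift (fun x => decide (p x)) fun x y ⟨k, hk⟩ => by simp [← hk, hp]
  rw [Nat.card_eq_of_bijective f, Nat.card_eq_fintype_card, Fintype.card_bool]
  constructor
  · rintro ⟨x⟩ ⟨y⟩ hxy
    obtain ⟨k, rfl⟩ := hpre y x (by simpa [f] using hxy.symm)
    exact Quotient.sound ⟨k, rfl⟩
  · obtain ⟨x, hx⟩ := hpos
    obtain ⟨y, hy⟩ := hneg
    rintro (_ | _)
    · exact ⟨⟦y⟧, by simpa [f] using hy⟩
    · exact ⟨⟦x⟧, by simpa [f] using hx⟩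

theorem exists_smul_eq_of_natCard_orbitRel_quotient_eq_two
    (hcard : Nat.card (orbitRel.Quotient K X) = 2) {x₀ : X} (hx₀ : ∀ k : K, k • x₀ = x₀)
    {x y : X} (hx : x ≠ x₀) (hy : y ≠ x₀) : ∃ k : K, k • x = y := by
  have hne : ∀ z, z ≠ x₀ → (⟦z⟧ : orbitRel.Quotient K X) ≠ ⟦x₀⟧ := by
    rintro z hz h
    obtain ⟨k, hk⟩ := Quotient.exact h
    exact hz (by rw [← hk]; exact hx₀ k)
  obtain ⟨_, _, huniq⟩ := (Nat.card_eq_two_iff' _).mp hcard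
  exact Quotient.exact ((huniq _ (hne y hy)).trans (huniq _ (hne x hx)).symm)

theorem sum_natCard_fixedBy_eq_card_orbits_mul_card_group [Fintype K] [Finite X] :
    ∑ k : K, Nat.card (fixedBy X k) = Nat.card (orbitRel.Quotient K X) * Nat.card K := by
  have := Fintype.ofFinite X
  have := Fintype.ofFinite (orbitRel.Quotient K X)
  simpa [Nat.card_eq_fintype_card] using sum_card_fixedBy_eq_card_orbits_mul_card_group K X

end MulAction

theorem sum_mul_ite_conj_mem {G : Type*} [Group G] [Fintype G] (H : Subgroup G) (ψ : G → ℂ)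
    (hψ : ∀ x g, ψ (x * g * x⁻¹) = ψ g) (x : G) :
    ∑ g, ψ g * (if x⁻¹ * g * x ∈ H then 1 else 0) = ∑ h : H, ψ h := by
  rw [← Equiv.sum_comp (MulAut.conj x).toEquiv]
  have hconj (g : G) : x⁻¹ * (x * g * x⁻¹) * x = g := by group
  simp only [MulEquiv.toEquiv_eq_coe, EquivLike.coe_coe, MulAut.conj_apply, hψ, hconj, mul_ite,
    mul_one, mul_zero, ← Finset.sum_filter]
  exact Finset.sum_subtype _ (by simp) ψ

theorem inner_induced_trivial_eq {G : Type*} [Group G] [Fintype G] (H : Subgroup G)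
    (ψ : G → ℂ) (hψ : ∀ x g, ψ (x * g * x⁻¹) = ψ g) :
    (Nat.card G : ℂ)⁻¹ * ∑ g, ψ g *
        (starRingEnd ℂ) ((Nat.card H : ℂ)⁻¹ * ∑ x, if x⁻¹ * g * x ∈ H then 1 else 0) =
      (Nat.card H : ℂ)⁻¹ * ∑ h : H, ψ h := by
  simp only [map_mul, map_inv₀, map_natCast, map_sum, apply_ite, map_one, map_zero]
  calc (Nat.card G : ℂ)⁻¹ * ∑ g, ψ g *
        ((Nat.card H : ℂ)⁻¹ * ∑ x, if x⁻¹ * g * x ∈ H then 1 else 0)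
      = (Nat.card G : ℂ)⁻¹ * (Nat.card H : ℂ)⁻¹ *
          ∑ x, ∑ g, ψ g * (if x⁻¹ * g * x ∈ H then 1 else 0) := by
        simp only [Finset.mul_sum]
        rw [Finset.sum_comm]
        exact Finset.sum_congr rfl fun _ _ => Finset.sum_congr rfl fun _ _ => by ring
    _ = (Nat.card H : ℂ)⁻¹ * ∑ h : H, ψ h := by
        simp only [sum_mul_ite_conj_mem H ψ hψ, Finset.sum_const, Finset.card_univ, nsmul_eq_mul,
          ← Nat.card_eq_fintype_card]
        field_simp

theorem LinearMap.finrank_ker_dualMap {K V : Type*} [Field K] [AddCommGroup V] [Module K V]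
    [FiniteDimensional K V] (f : V →ₗ[K] V) :
    finrank K (LinearMap.ker f.dualMap) = finrank K (LinearMap.ker f) := by
  have h₁ := f.finrank_range_add_finrank_ker
  have h₂ := f.dualMap.finrank_range_add_finrank_ker
  rw [finrank_range_dualMap_eq_finrank_range, Subspace.dual_finrank_eq] at h₂
  omega

section

variable {F V : Type*} [Field F] [AddCommGroup V] [Module F V]

theorem LinearEquiv.natCard_fixedBy_dual [FiniteDimensional F V] (g : V ≃ₗ[F] V) :
    Nat.card (fixedBy (Dual F V) g) = Nat.card (fixedBy V g) := by
  let f : V →ₗ[F] V := g.toLinearMap - LinearMap.id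
  have hV : fixedBy V g = LinearMap.ker f := by
    ext v; simp [f, sub_eq_zero]
  have hD : fixedBy (Dual F V) g = LinearMap.ker f.dualMap := by
    ext φ
    simp only [mem_fixedBy, SetLike.mem_coe, LinearMap.mem_ker, f]
    constructor
    · intro h; ext v
      simpa [LinearEquiv.dual_smul_apply, sub_eq_zero] using (LinearMap.congr_fun h (g v)).symm
    · intro h; ext v
      have hv : φ v = φ (g.symm v) := by simpa [sub_eq_zero] using LinearMap.congr_fun h (g.symm v)
      exact hv.symm
  rw [hV, hD]
  have := Free.of_divisionRing F (LinearMap.ker f.dualMap)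
  exact Nat.card_congr (LinearEquiv.ofFinrankEq _ _ f.finrank_ker_dualMap).toEquiv

theorem natCard_orbitRel_quotient_dual_eq [Finite F] [Finite V] (K : Subgroup (V ≃ₗ[F] V)) :
    Nat.card (orbitRel.Quotient K (Dual F V)) = Nat.card (orbitRel.Quotient K V) := by
  have := Fintype.ofFinite K
  refine Nat.eq_of_mul_eq_mul_right (Nat.card_pos (α := K)) ?_
  rw [← sum_natCard_fixedBy_eq_card_orbits_mul_card_group,
    ← sum_natCard_fixedBy_eq_card_orbits_mul_card_group]
  exact Finset.sum_congr rfl fun k _ => (k : V ≃ₗ[F] V).natCard_fixedBy_dual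

theorem natCard_orbitRel_quotient_eq_two_of_transitive (K : Subgroup (V ≃ₗ[F] V))
    (htrans : ∀ v w : V, v ≠ 0 → w ≠ 0 → ∃ g ∈ K, g v = w) {v : V} (hv : v ≠ 0) :
    Nat.card (orbitRel.Quotient K V) = 2 := by
  refine natCard_orbitRel_quotient_eq_two (· = 0) (fun k x => ?_) (fun x y hxy => ?_) ⟨0, rfl⟩
    ⟨v, hv⟩
  · exact (k : V ≃ₗ[F] V).map_eq_zero_iff
  · by_cases hx : x = 0
    · exact ⟨1, by rw [one_smul, hx, hxy.mp hx]⟩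
    · obtain ⟨g, hg, rfl⟩ := htrans x y hx (mt hxy.mpr hx)
      exact ⟨⟨g, hg⟩, rfl⟩

theorem exists_mem_smul_dual_eq [Finite F] [Finite V] (K : Subgroup (V ≃ₗ[F] V))
    (htrans : ∀ v w : V, v ≠ 0 → w ≠ 0 → ∃ g ∈ K, g v = w) {φ ψ : Dual F V}
    (hφ : φ ≠ 0) (hψ : ψ ≠ 0) : ∃ g ∈ K, g • φ = ψ := by
  obtain ⟨v, hv⟩ : ∃ v, φ v ≠ 0 := by
    by_contra! h
    exact hφ (LinearMap.ext h)
  have hcard := natCard_orbitRel_quotient_eq_two_of_transitive K htrans (v := v)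
    (by rintro rfl; simp at hv)
  rw [← natCard_orbitRel_quotient_dual_eq] at hcard
  obtain ⟨g, hg⟩ := exists_smul_eq_of_natCard_orbitRel_quotient_eq_two hcard
    (fun _ => LinearMap.zero_comp _) hφ hψ
  exact ⟨g, g.2, hg⟩

theorem Submodule.exists_dual_forall_mem_iff [FiniteDimensional F V] {W : Submodule F V}
    (hW : finrank F W + 1 = finrank F V) : ∃ φ : Dual F V, ∀ v, v ∈ W ↔ φ v = 0 := by
  have hq : finrank F (V ⧸ W) = finrank F F := by
    have := W.finrank_quotient_add_finrank
    rw [finrank_self]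
    omega
  obtain ⟨e⟩ := FiniteDimensional.nonempty_linearEquiv_of_finrank_eq hq
  exact ⟨e.toLinearMap ∘ₗ W.mkQ, fun v => by simp [Submodule.Quotient.mk_eq_zero]⟩

theorem exists_mem_preserving_sub_mem [Finite F] [Finite V] (G₀ : Subgroup (V ≃ₗ[F] V))
    (htrans : ∀ v w : V, v ≠ 0 → w ≠ 0 → ∃ g ∈ G₀, g v = w) {W : Submodule F V}
    (hW : finrank F W + 1 = finrank F V) {x y : V} (hxy : x ∈ W ↔ y ∈ W) :
    ∃ g ∈ G₀, (∀ u, g u ∈ W ↔ u ∈ W) ∧ y - g x ∈ W := by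
  by_cases hx : x ∈ W
  · exact ⟨1, G₀.one_mem, fun _ => Iff.rfl, W.sub_mem (hxy.mp hx) hx⟩
  obtain ⟨φ, hφ⟩ := Submodule.exists_dual_forall_mem_iff hW
  have hφx : φ x ≠ 0 := mt (hφ x).mpr hx
  have hφy : φ y ≠ 0 := mt (hφ y).mpr (mt hxy.mpr hx)
  have hc : φ y / φ x ≠ 0 := div_ne_zero hφy hφx
  have hφ0 : φ ≠ 0 := fun h => hφx (by simp [h])
  -- `g` rescales `φ` by `φ y / φ x`, so it preserves `W = ker φ` and sends `x` into `y + W`.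
  obtain ⟨g, hg, hgφ⟩ := exists_mem_smul_dual_eq G₀ htrans (smul_ne_zero hc hφ0) hφ0
  have hφg (u : V) : φ (g u) = φ y / φ x * φ u := by
    simpa [LinearEquiv.dual_smul_apply] using (LinearMap.congr_fun hgφ (g u)).symm
  refine ⟨g, hg, fun u => ?_, ?_⟩
  · rw [hφ, hφ, hφg, mul_eq_zero, or_iff_right hc]
  · rw [hφ, map_sub, hφg, div_mul_cancel₀ _ hφx, sub_self]

theorem AffineEquiv.forall_apply_mem_iff (e : V ≃ᵃ[F] V) (W : Submodule F V) :
    (∀ x, e x ∈ W ↔ x ∈ W) ↔ e 0 ∈ W ∧ e.linear '' W = W := by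
  have hdecomp (x : V) : e x = e.linear x + e 0 := congr_fun (AffineMap.decomp e.toAffineMap) x
  rw [show e.linear '' (W : Set V) = W ↔ _ from e.linear.toEquiv.image_eq_self_iff W]
  constructor
  · intro h
    have h0 : e 0 ∈ W := (h 0).mpr W.zero_mem
    exact ⟨h0, fun x => (W.add_mem_iff_left h0).symm.trans (hdecomp x ▸ h x)⟩
  · rintro ⟨h0, h⟩ x
    rw [hdecomp, W.add_mem_iff_left h0]
    exact h x

theorem mem_stabilizer_submodule_iff (G₀ : Subgroup (V ≃ₗ[F] V)) (e : affGroup G₀)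
    (W : Submodule F V) :
    e ∈ stabilizer (affGroup G₀) (W : Set V) ↔
      (e : V ≃ᵃ[F] V) 0 ∈ W ∧ (e : V ≃ᵃ[F] V).linear '' W = W := by
  rw [mem_stabilizer_set, ← AffineEquiv.forall_apply_mem_iff]
  rfl

theorem natCard_orbitRel_quotient_stabilizer_eq_two [Finite F] [Finite V]
    (G₀ : Subgroup (V ≃ₗ[F] V)) (htrans : ∀ v w : V, v ≠ 0 → w ≠ 0 → ∃ g ∈ G₀, g v = w)
    {W : Submodule F V} (hW : finrank F W + 1 = finrank F V) :
    Nat.card (orbitRel.Quotient (stabilizer (affGroup G₀) (W : Set V)) V) = 2 := by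
  refine natCard_orbitRel_quotient_eq_two (· ∈ W) (fun e x => mem_stabilizer_set.mp e.2 x)
    (fun x y hxy => ?_) ⟨0, W.zero_mem⟩ ?_
  · obtain ⟨g, hg, hgW, hy⟩ := exists_mem_preserving_sub_mem G₀ htrans hW hxy
    let e : V ≃ᵃ[F] V := AffineEquiv.constVAdd F V (y - g x) * g.toAffineEquiv
    refine ⟨⟨⟨e, hg⟩, mem_stabilizer_set.mpr fun u => ?_⟩, ?_⟩
    · show (y - g x) + g u ∈ W ↔ u ∈ W
      rw [W.add_mem_iff_right hy, hgW]
    · show (y - g x) + g x = y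
      exact sub_add_cancel y (g x)
  · by_contra! h
    rw [Submodule.eq_top_iff'.mpr h, finrank_top] at hW
    omega

theorem affPsi_conj (G₀ : Subgroup (V ≃ₗ[F] V)) (x g : affGroup G₀) :
    affPsi G₀ (x * g * x⁻¹) = affPsi G₀ g := by
  show (Nat.card (fixedBy V (x * g * x⁻¹)) : ℂ) - 1 = Nat.card (fixedBy V g) - 1
  rw [← smul_fixedBy, Set.natCard_smul_set]

theorem sum_affPsi [Finite V] (G₀ : Subgroup (V ≃ₗ[F] V)) (K : Subgroup (affGroup G₀))
    [Fintype K] :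
    ∑ k : K, affPsi G₀ k = ((Nat.card (orbitRel.Quotient K V) : ℂ) - 1) * Nat.card K := by
  have hfix (k : K) : affPsi G₀ k = Nat.card (fixedBy V k) - 1 := rfl
  simp only [hfix, Finset.sum_sub_distrib, ← Nat.cast_sum,
    sum_natCard_fixedBy_eq_card_orbits_mul_card_group, Finset.sum_const, Finset.card_univ,
    ← Nat.card_eq_fintype_card]
  push_cast
  ring

end

theorem affine_psi_multiplicity_one_general {F V : Type*} [Field F] [Fintype F]
    [AddCommGroup V] [Module F V] [Fintype V]
    (G₀ : Subgroup (V ≃ₗ[F] V))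
    (htrans : ∀ v w : V, v ≠ 0 → w ≠ 0 → ∃ g ∈ G₀, g v = w)
    (W : Submodule F V) (hW : Module.finrank F W + 1 = Module.finrank F V)
    (H : Set (affGroup G₀))
    (hH : H = {e : affGroup G₀ | (e : V ≃ᵃ[F] V) 0 ∈ W ∧
      (e : V ≃ᵃ[F] V).linear '' (W : Set V) = (W : Set V)}) :
    affClassInner G₀ (affPsi G₀) (affIndTrivial G₀ H) = 1 := by
  obtain rfl : H = stabilizer (affGroup G₀) (W : Set V) := by
    ext e
    rw [hH]
    exact (mem_stabilizer_submodule_iff G₀ e W).symm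
  have := Fintype.ofFinite (affGroup G₀)
  have key := inner_induced_trivial_eq (stabilizer (affGroup G₀) (W : Set V)) (affPsi G₀)
    (affPsi_conj G₀)
  rw [sum_affPsi, natCard_orbitRel_quotient_stabilizer_eq_two G₀ htrans hW] at key
  simp only [affClassInner, affIndTrivial, finsum_eq_sum_of_fintype]
  refine key.trans ?_
  have : (Nat.card (stabilizer (affGroup G₀) (W : Set V)) : ℂ) ≠ 0 :=
    Nat.cast_ne_zero.mpr Nat.card_pos.ne'
  field_simp
  norm_num

/-- Let `F` be a finite field of order `q`, `V` an `F`-vector space of dimension `n ≥ 2`,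
`G₀ ≤ GL(V)` transitive on nonzero vectors, `G = V ⋊ G₀` acting 2-transitively on `V` by
`(v,g)·w = v + g(w)`, and `ψ` the irreducible character with `1 + ψ` the permutation character.
Let `W < V` be a hyperplane, `S = {g ∈ G₀ : g(W) = W}` and `H = W⋊S ≤ G`.  Then
`⟨ψ, Ind_H^G(1_H)⟩ = 1`. -/
theorem affine_psi_multiplicity_one {F V : Type*} [Field F] [Fintype F]
    [AddCommGroup V] [Module F V] [Fintype V]
    (hn : 2 ≤ Module.finrank F V)
    (G₀ : Subgroup (V ≃ₗ[F] V))
    (htrans : ∀ v w : V, v ≠ 0 → w ≠ 0 → ∃ g ∈ G₀, g v = w)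
    (W : Submodule F V) (hW : Module.finrank F W + 1 = Module.finrank F V)
    (H : Set (affGroup G₀))
    (hH : H = {e : affGroup G₀ | (e : V ≃ᵃ[F] V) 0 ∈ W ∧
      (e : V ≃ᵃ[F] V).linear '' (W : Set V) = (W : Set V)}) :
    affClassInner G₀ (affPsi G₀) (affIndTrivial G₀ H) = 1 :=
  affine_psi_multiplicity_one_general G₀ htrans W hW H hH
end

section
/- For n ≥ 5, consider the natural action of the alternating group Alt(n) on {1,…,n}. Every (Alt(n), {1,…,n})-Cameron–Liebler set is canonical, i.e., every CL set is a disjoint union of stars Alt(n)_{a→b} = {g ∈ Alt(n) : g(a) = b}. -/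
open Finset MulAction Equiv Equiv.Perm

section Stars

variable {G Ω : Type*} [Group G] [MulAction G Ω]

def starSum [Fintype Ω] {R : Type*} [AddCommMonoid R] (c : Ω → Ω → R) (g : G) : R :=
  ∑ a, c a (g • a)

variable (G Ω) in
def starSumₗ [Fintype Ω] : (Ω → Ω → ℂ) →ₗ[ℂ] G → ℂ where
  toFun c := starSum c
  map_add' c d := by ext g; simp [starSum, Finset.sum_add_distrib]
  map_smul' r c := by ext g; simp [starSum, Finset.mul_sum]

lemma indicatorVec_star_eq_starSumₗ [Fintype Ω] [DecidableEq Ω] (a b : Ω) :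
    indicatorVec {g : G | g • a = b} =
      starSumₗ G Ω fun a' b' => if a' = a ∧ b' = b then 1 else 0 := by
  ext g
  simp [starSumₗ, starSum, indicatorVec, Set.indicator_apply, ite_and]

lemma IsCLSet.exists_starSum_eq [Fintype Ω] {L : Set G} (hL : IsCLSet G Ω L) :
    ∃ c : Ω → Ω → ℝ, (starSum c : G → ℝ) = L.indicator 1 := by
  classical
  have hrange : indicatorVec L ∈ LinearMap.range (starSumₗ G Ω) := by
    refine Submodule.span_le.mpr ?_ hL
    rintro _ ⟨a, b, rfl⟩
    exact ⟨_, (indicatorVec_star_eq_starSumₗ a b).symm⟩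
  obtain ⟨c, hc⟩ := hrange
  refine ⟨fun a b => (c a b).re, funext fun g => ?_⟩
  have := congrArg Complex.re (congrFun hc g)
  simpa [starSumₗ, starSum, Complex.re_sum, indicatorVec, Set.indicator_apply, apply_ite] using this

variable (G Ω) in
def IsCanonical (L : Set G) : Prop :=
  ∃ J : Set (Ω × Ω),
    (∀ p ∈ J, ∀ q ∈ J, p ≠ q → Disjoint {g : G | g • p.1 = p.2} {g : G | g • q.1 = q.2}) ∧
    L = ⋃ p ∈ J, {g : G | g • p.1 = p.2}

lemma isCanonical_setOf_smul_mem (a : Ω) (B : Set Ω) : IsCanonical G Ω {g | g • a ∈ B} := by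
  refine ⟨{p | p.1 = a ∧ p.2 ∈ B}, ?_, ?_⟩
  · rintro ⟨a₁, b₁⟩ ⟨ha₁, -⟩ ⟨a₂, b₂⟩ ⟨ha₂, -⟩ hne
    refine Set.disjoint_left.mpr fun g (h₁ : g • a₁ = b₁) (h₂ : g • a₂ = b₂) => hne ?_
    simp_all
  · ext g
    simp

lemma isCanonical_setOf_inv_smul_mem (b : Ω) (A : Set Ω) : IsCanonical G Ω {g | g⁻¹ • b ∈ A} := by
  refine ⟨{p | p.1 ∈ A ∧ p.2 = b}, ?_, ?_⟩
  · rintro ⟨a₁, b₁⟩ ⟨-, hb₁⟩ ⟨a₂, b₂⟩ ⟨-, hb₂⟩ hne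
    have hb : b₁ = b₂ := hb₁.trans hb₂.symm
    exact Set.disjoint_left.mpr fun g (h₁ : g • a₁ = b₁) (h₂ : g • a₂ = b₂) =>
      hne (Prod.ext (smul_left_cancel g (by rw [h₁, h₂, hb])) hb)
  · ext g
    simp only [Set.mem_ofPred_eq, Set.mem_iUnion, exists_prop, Prod.exists]
    constructor
    · exact fun h => ⟨_, b, ⟨h, rfl⟩, smul_inv_smul g b⟩
    · rintro ⟨a, _, ⟨ha, rfl⟩, rfl⟩
      simpa using ha

lemma starSum_mul_sub [Fintype Ω] (c : Ω → Ω → ℝ) (g γ : G) (s : Finset Ω)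
    (hs : ∀ t ∉ s, γ • t = t) :
    starSum c (g * γ) - starSum c g = ∑ t ∈ s, (c t (g • γ • t) - c t (g • t)) := by
  simp only [starSum, ← sum_sub_distrib, mul_smul]
  symm
  apply sum_subset (subset_univ s)
  intro t _ ht
  rw [hs t ht, sub_self]

lemma starSum_eq_add_sum [Fintype Ω] [DecidableEq Ω] {c : Ω → Ω → ℝ} {r κ W : Ω → ℝ}
    {A : Finset Ω} (hc : ∀ t x, c t x = r x + (if t ∈ A then W x else 0) + κ t) (g : G) :
    starSum c g = (∑ x, r x + ∑ t, κ t) + ∑ t ∈ A, W (g • t) := by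
  simp only [starSum, hc, sum_add_distrib, sum_ite_mem, univ_inter]
  rw [show ∑ x, r (g • x) = ∑ x, r x from Equiv.sum_comp (MulAction.toPerm g) r]
  ring

lemma exists_sum_eq_comp_smul_of_card_le_one [Nonempty Ω] {A : Finset Ω} (hA : #A ≤ 1) (C : ℝ)
    (W : Ω → ℝ) :
    ∃ (a : Ω) (φ : Ω → ℝ), ∀ g : G, C + ∑ t ∈ A, W (g • t) = φ (g • a) := by
  obtain ⟨a, ha⟩ := card_le_one_iff_subset_singleton.mp hA
  rcases subset_singleton_iff.mp ha with rfl | rfl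
  · exact ⟨a, fun _ => C, by simp⟩
  · exact ⟨a, fun y => C + W y, by simp⟩

lemma sum_smul_eq_of_forall_ne [DecidableEq Ω] {W : Ω → ℝ} {x₀ : Ω} {ω : ℝ}
    (hW : ∀ y ≠ x₀, W y = ω) (A : Finset Ω) (g : G) :
    ∑ t ∈ A, W (g • t) = #A * ω + if g⁻¹ • x₀ ∈ A then W x₀ - ω else 0 := by
  have h : ∀ t, W (g • t) = ω + if t = g⁻¹ • x₀ then W x₀ - ω else 0 := by
    intro t
    by_cases ht : t = g⁻¹ • x₀
    · simp [ht]
    · rw [if_neg ht, add_zero, hW _ fun e => ht (eq_inv_smul_iff.mpr e)]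
  simp [h, sum_add_distrib, sum_ite_eq']

end Stars

lemma Finset.exists_notMem_of_card_lt {α : Type*} [Fintype α] {s : Finset α}
    (h : #s < Fintype.card α) : ∃ x, x ∉ s := by
  obtain ⟨x, -, hx⟩ := exists_mem_notMem_of_card_lt_card (t := univ) (by simpa using h)
  exact ⟨x, hx⟩

section TwoValued

variable {α : Type*} {f : α → ℝ} {x₀ : α}

lemma eq_or_eq_add_one_of_sub_mem (hmin : ∀ x, f x₀ ≤ f x)
    (hf : ∀ x z, f z - f x ∈ ({-1, 0, 1} : Set ℝ)) (x : α) : f x = f x₀ ∨ f x = f x₀ + 1 := by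
  have e := hf x₀ x
  simp only [Set.mem_insert_iff, Set.mem_singleton_iff] at e
  rcases e with e | e | e
  · linarith [hmin x]
  · left; linarith
  · right; linarith

lemma exists_eq_add_one_of_sub_mem (hmin : ∀ x, f x₀ ≤ f x)
    (hf : ∀ x z, f z - f x ∈ ({-1, 0, 1} : Set ℝ)) (hne : ∃ p q, f p ≠ f q) :
    ∃ x₁, f x₁ = f x₀ + 1 := by
  obtain ⟨p, q, hpq⟩ := hne
  rcases eq_or_eq_add_one_of_sub_mem hmin hf p with hp | hp
  · rcases eq_or_eq_add_one_of_sub_mem hmin hf q with hq | hq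
    · exact (hpq (hp.trans hq.symm)).elim
    · exact ⟨q, hq⟩
  · exact ⟨p, hp⟩

end TwoValued

section CycleBounded

variable {α : Type*}

/-- The constraint satisfied by two row differences `v = c b - c d`, `w = c a - c b` of a
`{0,1}`-valued star sum: it is the difference of its values at `g * (a b d)` and at `g`,
where `g` sends `a, b, d` to `x, y, z`. -/
def IsCycleBounded (v w : α → ℝ) : Prop :=
  ∀ ⦃x y z⦄, x ≠ y → x ≠ z → y ≠ z → v z - v x + (w y - w x) ∈ ({-1, 0, 1} : Set ℝ)

namespace IsCycleBounded

variable {v w : α → ℝ}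

lemma swap (h : IsCycleBounded v w) : IsCycleBounded w v := fun x y z hxy hxz hyz => by
  simpa only [add_comm] using h hxz hxy hyz.symm

lemma neg (h : IsCycleBounded v w) : IsCycleBounded (-v) (-w) := fun x y z hxy hxz hyz => by
  have e : (-v) z - (-v) x + ((-w) y - (-w) x) = -(v z - v x + (w y - w x)) := by
    simp only [Pi.neg_apply]; ring
  have h := h hxy hxz hyz
  simp only [Set.mem_insert_iff, Set.mem_singleton_iff] at h
  rw [e]
  rcases h with h | h | h <;> norm_num [h]

lemma add_neg (h : IsCycleBounded v w) : IsCycleBounded (v + w) (-w) := fun x y z hxy hxz hyz => by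
  have e : (v + w) z - (v + w) x + ((-w) y - (-w) x) = -(v x - v z + (w y - w z)) := by
    simp only [Pi.add_apply, Pi.neg_apply]; ring
  have h := h hyz.symm hxz.symm hxy.symm
  simp only [Set.mem_insert_iff, Set.mem_singleton_iff] at h
  rw [e]
  rcases h with h | h | h <;> norm_num [h]

lemma sub_mem [Fintype α] (h : IsCycleBounded v w) (h4 : 4 ≤ Fintype.card α) (z z' : α) :
    v z - v z' ∈ ({-2, -1, 0, 1, 2} : Set ℝ) := by
  classical
  obtain ⟨x, hx⟩ := exists_notMem_of_card_lt (s := ({z, z'} : Finset α))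
    (card_le_two.trans_lt (by omega))
  obtain ⟨y, hy⟩ := exists_notMem_of_card_lt (s := ({x, z, z'} : Finset α))
    (card_le_three.trans_lt (by omega))
  simp only [mem_insert, mem_singleton, not_or] at hx hy
  have e : v z - v z' = (v z - v x + (w y - w x)) - (v z' - v x + (w y - w x)) := by ring
  have h₁ := h (Ne.symm hy.1) hx.1 hy.2.1
  have h₂ := h (Ne.symm hy.1) hx.2 hy.2.2
  simp only [Set.mem_insert_iff, Set.mem_singleton_iff] at h₁ h₂
  rw [e]
  rcases h₁ with h₁ | h₁ | h₁ <;> rcases h₂ with h₂ | h₂ | h₂ <;> norm_num [h₁, h₂]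

lemma bounds_of_sub_eq_two (h : IsCycleBounded v w) {x z : α} (hxz : v z - v x = 2) {y : α}
    (hyx : y ≠ x) (hyz : y ≠ z) : w z + 1 ≤ w y ∧ w y ≤ w x - 1 := by
  have hxz' : x ≠ z := by rintro rfl; norm_num at hxz
  have h₁ := h hyx.symm hxz' hyz
  have h₂ := h hyz.symm hxz'.symm hyx
  simp only [Set.mem_insert_iff, Set.mem_singleton_iff] at h₁ h₂
  rcases h₁ with h₁ | h₁ | h₁ <;> rcases h₂ with h₂ | h₂ | h₂ <;> constructor <;> linarith

lemma add_eq_of_sub_eq_two [Fintype α] (h : IsCycleBounded v w) (h4 : 4 ≤ Fintype.card α)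
    {x z : α} (hxz : v z - v x = 2) (y : α) : (v + w) y = (v + w) x := by
  classical
  have hxz' : x ≠ z := by rintro rfl; norm_num at hxz
  obtain ⟨y₀, hy₀⟩ := exists_notMem_of_card_lt (s := ({x, z} : Finset α))
    (card_le_two.trans_lt (by omega))
  simp only [mem_insert, mem_singleton, not_or] at hy₀
  have hw : w x - w z = 2 := by
    have := h.bounds_of_sub_eq_two hxz hy₀.1 hy₀.2
    have e := h.swap.sub_mem h4 x z
    simp only [Set.mem_insert_iff, Set.mem_singleton_iff] at e
    rcases e with e | e | e | e | e <;> linarith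
  simp only [Pi.add_apply]
  by_cases hyx : y = x
  · rw [hyx]
  by_cases hyz : y = z
  · rw [hyz]; linarith
  have hwy := h.bounds_of_sub_eq_two hxz hyx hyz
  have hvy := h.swap.bounds_of_sub_eq_two hw hyz hyx
  linarith [hwy.1, hwy.2, hvy.1, hvy.2]

lemma sub_mem_of_exists_add_ne [Fintype α] (h : IsCycleBounded v w) (h4 : 4 ≤ Fintype.card α)
    (hs : ∃ p q, (v + w) p ≠ (v + w) q) (x z : α) : v z - v x ∈ ({-1, 0, 1} : Set ℝ) := by
  obtain ⟨p, q, hpq⟩ := hs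
  have hconst : ∀ {x' z'}, v z' - v x' = 2 → False := fun e =>
    hpq ((h.add_eq_of_sub_eq_two h4 e p).trans (h.add_eq_of_sub_eq_two h4 e q).symm)
  have e := h.sub_mem h4 z x
  simp only [Set.mem_insert_iff, Set.mem_singleton_iff] at e
  rcases e with e | e | e | e | e
  · exact (hconst (x' := z) (z' := x) (by linarith)).elim
  · simp [e]
  · simp [e]
  · simp [e]
  · exact (hconst e).elim

lemma false_of_add_one (h : IsCycleBounded v w) (hs : ∀ x z, (v + w) z - (v + w) x ≠ 2)
    {x y z : α} (hz : v z = v x + 1) (hy : w y = w x + 1) : False := by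
  rcases eq_or_ne y z with rfl | hyz
  · exact hs x y (by simp only [Pi.add_apply]; linarith)
  have hxy : x ≠ y := by rintro rfl; linarith
  have hxz : x ≠ z := by rintro rfl; linarith
  have e := h hxy hxz hyz
  simp only [Set.mem_insert_iff, Set.mem_singleton_iff] at e
  rcases e with e | e | e <;> linarith

lemma add_apply_eq_of_sub_mem [Finite α] [Nonempty α] (h : IsCycleBounded v w)
    (hs : ∀ x z, (v + w) z - (v + w) x ≠ 2) (hv₁ : ∀ x z, v z - v x ∈ ({-1, 0, 1} : Set ℝ))
    (hw₁ : ∀ x z, w z - w x ∈ ({-1, 0, 1} : Set ℝ)) (hv : ∃ p q, v p ≠ v q)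
    (hw : ∃ p q, w p ≠ w q) (p q : α) : (v + w) p = (v + w) q := by
  have hs' : ∀ x z, (-v + -w) z - (-v + -w) x ≠ 2 := fun x z e =>
    hs z x (by simp only [Pi.add_apply, Pi.neg_apply] at e ⊢; linarith)
  obtain ⟨x₀, hx₀⟩ := Finite.exists_min v
  obtain ⟨y₀, hy₀⟩ := Finite.exists_min w
  obtain ⟨x₁, hx₁⟩ := exists_eq_add_one_of_sub_mem hx₀ hv₁ hv
  obtain ⟨y₁, hy₁⟩ := exists_eq_add_one_of_sub_mem hy₀ hw₁ hw
  have hconst : ∀ x, (v + w) x = v x₀ + w y₀ + 1 := by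
    intro x
    simp only [Pi.add_apply]
    rcases eq_or_eq_add_one_of_sub_mem hx₀ hv₁ x with e | e <;>
      rcases eq_or_eq_add_one_of_sub_mem hy₀ hw₁ x with f | f
    · exact (h.false_of_add_one hs (x := x) (z := x₁) (y := y₁) (by linarith) (by linarith)).elim
    · linarith
    · linarith
    · exact (h.neg.false_of_add_one hs' (x := x) (z := x₀) (y := y₀)
        (by simp only [Pi.neg_apply]; linarith) (by simp only [Pi.neg_apply]; linarith)).elim
  rw [hconst p, hconst q]

theorem add_apply_eq [Fintype α] (h : IsCycleBounded v w) (h4 : 4 ≤ Fintype.card α)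
    (hv : ∃ p q, v p ≠ v q) (hw : ∃ p q, w p ≠ w q) (p q : α) : (v + w) p = (v + w) q := by
  by_contra hpq
  have hs : ∃ p q, (v + w) p ≠ (v + w) q := ⟨p, q, hpq⟩
  have : Nonempty α := ⟨p⟩
  have hs₂ : ∀ x z, (v + w) z - (v + w) x ≠ 2 := fun x z e => by
    obtain ⟨p, q, hpq⟩ := hv
    have hp := h.add_neg.add_eq_of_sub_eq_two h4 e p
    have hq := h.add_neg.add_eq_of_sub_eq_two h4 e q
    simp only [Pi.add_apply, Pi.neg_apply, add_neg_cancel_right] at hp hq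
    exact hpq (hp.trans hq.symm)
  exact hpq (h.add_apply_eq_of_sub_mem hs₂ (h.sub_mem_of_exists_add_ne h4 hs)
    (h.swap.sub_mem_of_exists_add_ne h4 (by simpa only [add_comm] using hs)) hv hw p q)

end IsCycleBounded

end CycleBounded

section SubsetSums

variable {α : Type*} [Fintype α] [DecidableEq α]

lemma eq_or_eq_of_add_eq_add {a b c d : ℝ} (ha : a = 0 ∨ a = 1) (hb : b = 0 ∨ b = 1)
    (hc : c = 0 ∨ c = 1) (hd : d = 0 ∨ d = 1) (h : a + d = b + c) : a = b ∨ a = c := by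
  rcases ha with rfl | rfl <;> rcases hb with rfl | rfl <;> rcases hc with rfl | rfl <;>
    rcases hd with rfl | rfl <;> norm_num at h <;> simp

/-- Take a `(k-2)`-set `S` avoiding `p, q, r, s` and compare the sums over `S ∪ {p, q}`,
`S ∪ {r, q}`, `S ∪ {p, s}` and `S ∪ {r, s}`. -/
lemma eq_or_eq_of_subsetSum {W : α → ℝ} {C : ℝ} {k : ℕ} (hk : 2 ≤ k)
    (hkn : k + 2 ≤ Fintype.card α)
    (hW : ∀ S : Finset α, #S = k → C + ∑ x ∈ S, W x = 0 ∨ C + ∑ x ∈ S, W x = 1)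
    {p q r s : α} (hpq : p ≠ q) (hps : p ≠ s) (hqr : q ≠ r) (hrs : r ≠ s) :
    W p = W r ∨ W q = W s := by
  obtain ⟨S, hS, hSk⟩ := exists_subset_card_eq (s := univ \ {p, q, r, s}) (n := k - 2) (by
    rw [card_sdiff_of_subset (subset_univ _), card_univ]
    have := card_le_four (a := p) (b := q) (c := r) (d := s)
    omega)
  have hpair : ∀ x y, x ≠ y → x ∈ ({p, q, r, s} : Finset α) → y ∈ ({p, q, r, s} : Finset α) →
      C + (W x + (W y + ∑ z ∈ S, W z)) = 0 ∨ C + (W x + (W y + ∑ z ∈ S, W z)) = 1 := by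
    intro x y hxy hx hy
    have hxS : x ∉ S := fun h => (mem_sdiff.mp (hS h)).2 hx
    have hyS : y ∉ S := fun h => (mem_sdiff.mp (hS h)).2 hy
    have hxyS : x ∉ insert y S := by simp [hxy, hxS]
    have hcard : #(insert x (insert y S)) = k := by
      rw [card_insert_of_notMem hxyS, card_insert_of_notMem hyS]
      omega
    rw [← sum_insert hyS, ← sum_insert hxyS]
    exact hW _ hcard
  have h := eq_or_eq_of_add_eq_add (hpair p q hpq (by simp) (by simp))
    (hpair r q hqr.symm (by simp) (by simp)) (hpair p s hps (by simp) (by simp))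
    (hpair r s hrs (by simp) (by simp)) (by ring)
  rcases h with h | h
  · left; linarith
  · right; linarith

lemma exists_forall_ne_eq_of_eq_or_eq {W : α → ℝ} (h4 : 4 ≤ Fintype.card α)
    (hW : ∀ ⦃p q r s⦄, p ≠ q → p ≠ s → q ≠ r → r ≠ s → W p = W r ∨ W q = W s) :
    ∃ x₀ ω, ∀ y ≠ x₀, W y = ω := by
  by_cases hconst : ∀ p r, W p = W r
  · obtain ⟨x₀⟩ : Nonempty α := Fintype.card_pos_iff.mp (by omega)
    exact ⟨x₀, W x₀, fun y _ => hconst y x₀⟩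
  simp only [not_forall] at hconst
  obtain ⟨p, r, hpr⟩ := hconst
  have hpr' : p ≠ r := ne_of_apply_ne W hpr
  have hrest : ∀ q s, q ≠ p → q ≠ r → s ≠ p → s ≠ r → W q = W s := by
    intro q s hqp hqr hsp hsr
    exact (hW hqp.symm hsp.symm hqr hsr.symm).resolve_left hpr
  obtain ⟨q₀, hq₀⟩ := exists_notMem_of_card_lt (s := ({p, r} : Finset α))
    (card_le_two.trans_lt (by omega))
  obtain ⟨q₁, hq₁⟩ := exists_notMem_of_card_lt (s := ({p, r, q₀} : Finset α))
    (card_le_three.trans_lt (by omega))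
  simp only [mem_insert, mem_singleton, not_or] at hq₀ hq₁
  by_cases hp : W p = W q₀
  · refine ⟨r, W q₀, fun y hyr => ?_⟩
    rcases eq_or_ne y p with rfl | hyp
    · exact hp
    · exact hrest y q₀ hyp hyr hq₀.1 hq₀.2
  · have hr : W q₀ = W r := (hW (Ne.symm hq₀.1) hpr' (Ne.symm hq₁.2.2) hq₁.2.1).resolve_left
      fun e => hp (e.trans (hrest q₁ q₀ hq₁.1 hq₁.2.1 hq₀.1 hq₀.2))
    refine ⟨p, W q₀, fun y hyp => ?_⟩
    rcases eq_or_ne y r with rfl | hyr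
    · exact hr.symm
    · exact hrest y q₀ hyp hyr hq₀.1 hq₀.2

end SubsetSums

section Alternating

variable {α : Type*} [Fintype α] [DecidableEq α]

lemma alternatingGroup.exists_smul_eq_of_distinct (h5 : 5 ≤ Fintype.card α) {a b d x y z : α}
    (hab : a ≠ b) (had : a ≠ d) (hbd : b ≠ d) (hxy : x ≠ y) (hxz : x ≠ z) (hyz : y ≠ z) :
    ∃ g : alternatingGroup α, g • a = x ∧ g • b = y ∧ g • d = z := by
  have := alternatingGroup.isMultiplyPretransitive α
  have : IsMultiplyPretransitive (alternatingGroup α) α 3 :=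
    isMultiplyPretransitive_of_le (n := Nat.card α - 2)
      (by rw [Nat.card_eq_fintype_card]; omega) (Nat.sub_le _ _)
  obtain ⟨g, hg⟩ := exists_smul_eq (alternatingGroup α)
    (⟨![a, b, d], by intro i j; fin_cases i <;> fin_cases j <;> simp [*, Ne.symm]⟩ : Fin 3 ↪ α)
    ⟨![x, y, z], by intro i j; fin_cases i <;> fin_cases j <;> simp [*, Ne.symm]⟩
  exact ⟨g, DFunLike.congr_fun hg 0, DFunLike.congr_fun hg 1, DFunLike.congr_fun hg 2⟩

lemma isCycleBounded_of_boolean (h5 : 5 ≤ Fintype.card α) {c : α → α → ℝ}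
    (hc : ∀ g : alternatingGroup α, starSum c g = 0 ∨ starSum c g = 1) {a b d : α}
    (hab : a ≠ b) (had : a ≠ d) (hbd : b ≠ d) : IsCycleBounded (c b - c d) (c a - c b) := by
  intro x y z hxy hxz hyz
  obtain ⟨g, rfl, rfl, rfl⟩ :=
    alternatingGroup.exists_smul_eq_of_distinct h5 hab had hbd hxy hxz hyz
  let γ : alternatingGroup α :=
    ⟨swap a d * swap a b, (isThreeCycle_swap_mul_swap_same had hab hbd.symm).mem_alternatingGroup⟩
  have hγ : ∀ t, γ • t = (swap a d * swap a b) t := fun _ => rfl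
  have hdiff := starSum_mul_sub c g γ {a, b, d} fun t ht => by
    simp only [mem_insert, mem_singleton, not_or] at ht
    rw [hγ, Perm.mul_apply, swap_apply_of_ne_of_ne ht.1 ht.2.1, swap_apply_of_ne_of_ne ht.1 ht.2.2]
  rw [sum_insert (by simp [hab, had]), sum_insert (by simp [hbd]), sum_singleton, hγ, hγ, hγ]
    at hdiff
  simp only [Perm.coe_mul, Function.comp_apply, swap_apply_left, swap_apply_right,
    swap_apply_of_ne_of_ne hab.symm hbd, swap_apply_of_ne_of_ne had.symm hbd.symm] at hdiff
  have e : (c b - c d) (g • d) - (c b - c d) (g • a) + ((c a - c b) (g • b) - (c a - c b) (g • a))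
      = starSum c (g * γ) - starSum c g := by
    rw [hdiff]; simp only [Pi.sub_apply]; ring
  rw [e]
  rcases hc (g * γ) with h₁ | h₁ <;> rcases hc g with h₂ | h₂ <;> norm_num [h₁, h₂]

lemma exists_starSum_eq_add_sum (h5 : 5 ≤ Fintype.card α) {c : α → α → ℝ}
    (hc : ∀ g : alternatingGroup α, starSum c g = 0 ∨ starSum c g = 1) :
    ∃ (A : Finset α) (W : α → ℝ) (C : ℝ),
      ∀ g : alternatingGroup α, starSum c g = C + ∑ t ∈ A, W (g • t) := by
  obtain ⟨b₀⟩ : Nonempty α := Fintype.card_pos_iff.mp (by omega)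
  set A := univ.filter fun t => ∃ p q, (c t - c b₀) p ≠ (c t - c b₀) q
  have hA : ∀ {t}, t ∈ A ↔ ∃ p q, (c t - c b₀) p ≠ (c t - c b₀) q := by simp [A]
  have hb₀ : ∀ {t}, t ∈ A → t ≠ b₀ := by rintro t ht rfl; simp [hA] at ht
  -- rows in `A` differ from any one row `a₀ ∈ A` by constants, the others from row `b₀`
  obtain ⟨W, hW⟩ : ∃ W : α → ℝ, ∀ t ∈ A, ∀ x,
      c t x - c b₀ x - W x = c t b₀ - c b₀ b₀ - W b₀ := by
    rcases A.eq_empty_or_nonempty with hAe | ⟨a₀, ha₀⟩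
    · exact ⟨0, by simp [hAe]⟩
    refine ⟨c a₀ - c b₀, fun t ht x => ?_⟩
    simp only [Pi.sub_apply]
    by_cases hta : t = a₀
    · subst hta; ring
    have hv : ∃ p q, (c b₀ - c a₀) p ≠ (c b₀ - c a₀) q := by
      obtain ⟨p, q, hpq⟩ := hA.mp ha₀
      exact ⟨p, q, fun e => hpq (by simp only [Pi.sub_apply] at e ⊢; linarith)⟩
    have := (isCycleBounded_of_boolean h5 hc (hb₀ ht) hta (hb₀ ha₀).symm).add_apply_eq
      (by omega) hv (hA.mp ht) x b₀
    simp only [Pi.add_apply, Pi.sub_apply] at this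
    linarith
  refine ⟨A, W, _, starSum_eq_add_sum (r := c b₀)
    (κ := fun t => c t b₀ - c b₀ b₀ - if t ∈ A then W b₀ else 0) fun t x => ?_⟩
  by_cases ht : t ∈ A
  · simp only [ht, if_true]
    linarith [hW t ht x]
  · have := hA.not.mp ht
    simp only [not_exists, not_not, Pi.sub_apply] at this
    simp only [ht, if_false]
    linarith [this x b₀]

lemma subsetSum_eq_zero_or_eq_one_of_forall (h3 : 3 ≤ Fintype.card α) {A : Finset α}
    {W : α → ℝ} {C : ℝ}
    (hA : ∀ g : alternatingGroup α, C + ∑ t ∈ A, W (g • t) = 0 ∨ C + ∑ t ∈ A, W (g • t) = 1)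
    (S : Finset α) (hS : #S = #A) : C + ∑ x ∈ S, W x = 0 ∨ C + ∑ x ∈ S, W x = 1 := by
  have := Set.powersetCard.isPretransitive_alternatingGroup (n := #A) (α := α)
    (by rwa [Nat.card_eq_fintype_card])
  obtain ⟨g, hg⟩ := exists_smul_eq (alternatingGroup α) (⟨A, rfl⟩ : Set.powersetCard α #A) ⟨S, hS⟩
  have hS' : S = A.image (g • ·) := (congrArg Subtype.val hg).symm
  rw [hS', sum_image fun _ _ _ _ => (smul_left_cancel_iff g).mp]
  exact hA g

theorem starSum_eq_comp_of_boolean (h5 : 5 ≤ Fintype.card α) {c : α → α → ℝ}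
    (hc : ∀ g : alternatingGroup α, starSum c g = 0 ∨ starSum c g = 1) :
    (∃ (a : α) (φ : α → ℝ), ∀ g : alternatingGroup α, starSum c g = φ (g • a)) ∨
      ∃ (b : α) (ψ : α → ℝ), ∀ g : alternatingGroup α, starSum c g = ψ (g⁻¹ • b) := by
  have : Nonempty α := Fintype.card_pos_iff.mp (by omega)
  obtain ⟨A, W, C, hF⟩ := exists_starSum_eq_add_sum h5 hc
  by_cases hA : #A ≤ 1
  · obtain ⟨a, φ, hφ⟩ := exists_sum_eq_comp_smul_of_card_le_one (G := alternatingGroup α) hA C W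
    exact .inl ⟨a, φ, fun g => (hF g).trans (hφ g)⟩
  by_cases hAc : #Aᶜ ≤ 1
  · obtain ⟨a, φ, hφ⟩ := exists_sum_eq_comp_smul_of_card_le_one (G := alternatingGroup α) hAc
      (C + ∑ x, W x) (-W)
    refine .inl ⟨a, φ, fun g => ?_⟩
    have hsplit := sum_add_sum_compl A fun t => W (g • t)
    have hperm : ∑ t, W (g • t) = ∑ x, W x := Equiv.sum_comp (toPerm g) W
    rw [hF g, ← hφ g]
    simp only [Pi.neg_apply, sum_neg_distrib]
    linarith
  rw [card_compl] at hAc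
  have hsub := subsetSum_eq_zero_or_eq_one_of_forall (by omega) fun g => hF g ▸ hc g
  obtain ⟨x₀, ω, hW⟩ := exists_forall_ne_eq_of_eq_or_eq (W := W) (by omega)
    fun p q r s hpq hps hqr hrs => eq_or_eq_of_subsetSum (by omega) (by omega) hsub hpq hps hqr hrs
  refine .inr ⟨x₀, fun t => C + #A * ω + if t ∈ A then W x₀ - ω else 0, fun g => ?_⟩
  rw [hF g, sum_smul_eq_of_forall_ne hW]
  ring

theorem isCanonical_of_starSum_eq_indicator (h5 : 5 ≤ Fintype.card α) {c : α → α → ℝ}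
    {L : Set (alternatingGroup α)} (hc : (starSum c : alternatingGroup α → ℝ) = L.indicator 1) :
    IsCanonical (alternatingGroup α) α L := by
  have hmem : ∀ g, g ∈ L ↔ starSum c g = 1 := fun g => by
    by_cases hg : g ∈ L <;> simp [hc, hg]
  have hbool : ∀ g, starSum c g = 0 ∨ starSum c g = 1 := fun g => by
    by_cases hg : g ∈ L <;> simp [hc, hg]
  rcases starSum_eq_comp_of_boolean h5 hbool with ⟨a, φ, hφ⟩ | ⟨b, ψ, hψ⟩
  · convert isCanonical_setOf_smul_mem a {y | φ y = 1}
    ext g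
    simp [hmem, hφ]
  · convert isCanonical_setOf_inv_smul_mem b {t | ψ t = 1}
    ext g
    simp [hmem, hψ]

end Alternating

/-- For `n ≥ 5`, every Cameron–Liebler set of the alternating group `Alt(n)` with its natural
action on `{1,…,n}` is canonical, i.e. a disjoint union of stars `Alt(n)_{a→b}`. -/
theorem alternating_cl_canonical (n : ℕ) (hn : 5 ≤ n)
    (L : Set (alternatingGroup (Fin n))) (hL : IsCLSet (alternatingGroup (Fin n)) (Fin n) L) :
    ∃ J : Set (Fin n × Fin n),
      (∀ p ∈ J, ∀ q ∈ J, p ≠ q →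
        Disjoint {g : alternatingGroup (Fin n) | g • p.1 = p.2}
          {g : alternatingGroup (Fin n) | g • q.1 = q.2}) ∧
      L = ⋃ p ∈ J, {g : alternatingGroup (Fin n) | g • p.1 = p.2} := by
  obtain ⟨c, hc⟩ := hL.exists_starSum_eq
  exact isCanonical_of_starSum_eq_indicator (by simpa using hn) hc
end
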